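/- arXiv:2003.06021 — 8 statements merged into one kernel-verified Lean document; each statement's English description precedes it below -/
import Mathlib

section
/- A continuous function F : ℝ^n → ℝ is the Lovász extension F = f^L of some set function f : P(V) → ℝ if and only if F is comonotonic additive, i.e., F(x + y) = F(x) + F(y) whenever x and y are comonotonic (meaning (x_i − x_j)(y_i − y_j) ≥ 0 for all i, j ∈ V). -/
open Finset

/-- The Lovász extension of a set function `f : 𝒫(V) → ℝ` on `V = Fin n`:
`f^L(x) = ∫_{min_i x_i}^{max_i x_i} f(V^t(x)) dt + f(V) · min_i x_i`,
where `V^t(x) = {i : x_i > t}`. -/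
noncomputable def lovasz {n : ℕ} (f : Finset (Fin n) → ℝ) (x : Fin n → ℝ) : ℝ :=
  (∫ t in (⨅ i, x i)..(⨆ i, x i), f (Finset.univ.filter (fun i => t < x i))) +
    f Finset.univ * (⨅ i, x i)

/-!
If `σ` sorts `x` decreasingly, the superlevel sets `V^t(x)` run through the chain of initial
segments `S_k = {σ 0, …, σ k}`, so `f^L(x) = ∑_{k < n-1} (x_{σ k} - x_{σ (k+1)}) f(S_k) +
x_{σ (n-1)} f(V)`: on the cone of vectors sorted by `σ`, `f^L` is linear. Two vectors are
comonotone exactly when one permutation sorts both, which gives additivity of `f^L`.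

Conversely, a comonotone additive `F` is additive on each such cone, positively homogeneous
(it is `ℚ≥0`-homogeneous, and continuous), and satisfies `F (c • 1) = c F 1` for every `c`.
Applying it to the layer decomposition `x = ∑_{k < n-1} (x_{σ k} - x_{σ (k+1)}) 1_{S_k} +
x_{σ (n-1)} 1` gives `F = f^L` for `f A = F 1_A`.
-/

open NNReal Set

def Comonotone {ι : Type*} (x y : ι → ℝ) : Prop :=
  ∀ i j, 0 ≤ (x i - x j) * (y i - y j)

def ComonotoneAdditive {ι : Type*} (F : (ι → ℝ) → ℝ) : Prop :=
  ∀ x y, Comonotone x y → F (x + y) = F x + F y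

namespace Comonotone

variable {ι : Type*} {x y : ι → ℝ}

theorem refl (x : ι → ℝ) : Comonotone x x := fun _ _ => mul_self_nonneg _

theorem symm (h : Comonotone x y) : Comonotone y x := fun i j => by
  rw [mul_comm]; exact h i j

theorem const_right (x : ι → ℝ) (c : ℝ) : Comonotone x fun _ => c := fun i j => by simp

theorem smul_smul_self {c d : ℝ} (hc : 0 ≤ c) (hd : 0 ≤ d) (x : ι → ℝ) :
    Comonotone (c • x) (d • x) := fun i j => by
  have := mul_nonneg (mul_nonneg hc hd) (mul_self_nonneg (x i - x j))
  simp only [Pi.smul_apply, smul_eq_mul, ← mul_sub]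
  linarith

theorem of_antitone_comp {α : Type*} [LinearOrder α] (σ : α ≃ ι)
    (hx : Antitone (x ∘ σ)) (hy : Antitone (y ∘ σ)) : Comonotone x y := fun i j => by
  obtain ⟨a, rfl⟩ := σ.surjective i
  obtain ⟨b, rfl⟩ := σ.surjective j
  rcases le_total a b with h | h
  · exact mul_nonneg (sub_nonneg.2 (hx h)) (sub_nonneg.2 (hy h))
  · exact mul_nonneg_of_nonpos_of_nonpos (sub_nonpos.2 (hx h)) (sub_nonpos.2 (hy h))

theorem antitone_comp_of_add {α : Type*} [Preorder α] {σ : α → ι} (h : Comonotone x y)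
    (hs : Antitone ((x + y) ∘ σ)) : Antitone (x ∘ σ) := fun a b hab => by
  have hxy := h (σ a) (σ b)
  have hsum : x (σ b) + y (σ b) ≤ x (σ a) + y (σ a) := hs hab
  show x (σ b) ≤ x (σ a)
  by_contra! hlt
  nlinarith [mul_nonneg (sub_nonneg.2 hlt.le) (sub_nonneg.2 hsum),
    mul_pos (sub_pos.2 hlt) (sub_pos.2 hlt)]

theorem exists_antitone_comp {n : ℕ} {x y : Fin n → ℝ} (h : Comonotone x y) :
    ∃ σ : Equiv.Perm (Fin n), Antitone (x ∘ σ) ∧ Antitone (y ∘ σ) := by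
  have hs : Antitone ((x + y) ∘ Tuple.sort (-(x + y))) := fun a b hab =>
    neg_le_neg_iff.1 (Tuple.monotone_sort (-(x + y)) hab)
  exact ⟨_, h.antitone_comp_of_add hs, h.symm.antitone_comp_of_add (add_comm x y ▸ hs)⟩

end Comonotone

namespace ComonotoneAdditive

variable {ι : Type*} {F : (ι → ℝ) → ℝ}

theorem map_zero (hF : ComonotoneAdditive F) : F 0 = 0 := by
  simpa using hF 0 0 (.refl 0)

theorem map_smul_of_nonneg (hF : ComonotoneAdditive F) (hcont : Continuous F) (x : ι → ℝ)
    {c : ℝ} (h : 0 ≤ c) : F (c • x) = c * F x := by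
  -- `c ↦ F (c • x)` is additive on `ℝ≥0`, hence `ℚ≥0`-homogeneous; through `|·|` the identity
  -- becomes one between continuous functions on `ℝ` that agree on the dense set `ℚ`.
  let g : ℝ≥0 →+ ℝ :=
    { toFun c := F ((c : ℝ) • x)
      map_zero' := by simpa using hF.map_zero
      map_add' c d := by
        simpa [add_smul] using hF _ _ (Comonotone.smul_smul_self c.2 d.2 x) }
  have hrat (q : ℚ) : F (|(q : ℝ)| • x) = |(q : ℝ)| * F x := by
    have habs : ((q.nnabs : ℚ≥0) : ℝ) = |(q : ℝ)| := by
      rw [← Rat.cast_abs, ← Rat.coe_nnabs, Rat.cast_nnratCast]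
    have habs' : ((q.nnabs : ℝ≥0) : ℝ) = |(q : ℝ)| := habs
    simpa [g, habs, habs'] using map_nnratCast_smul g ℝ≥0 ℝ q.nnabs 1
  have := Rat.denseRange_cast.equalizer (g := fun c : ℝ => F (|c| • x))
    (h := fun c => |c| * F x) (by fun_prop) (by fun_prop) (funext hrat)
  simpa [abs_of_nonneg h] using congrFun this c

theorem map_const (hF : ComonotoneAdditive F) (hcont : Continuous F) (c : ℝ) :
    F (fun _ => c) = c * F 1 := by
  have hpos {c : ℝ} (h : 0 ≤ c) : F (fun _ => c) = c * F 1 := by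
    simpa [Pi.smul_def] using hF.map_smul_of_nonneg hcont 1 h
  rcases le_total 0 c with h | h
  · exact hpos h
  · have hsum := hF _ _ (Comonotone.const_right (fun _ => c) (-c))
    rw [show ((fun _ => c) + fun _ => -c : ι → ℝ) = 0 by ext; simp, hF.map_zero,
      hpos (neg_nonneg.2 h)] at hsum
    linarith

theorem map_sum_of_antitone_comp (hF : ComonotoneAdditive F) {α κ : Type*} [LinearOrder α]
    (σ : α ≃ ι) (s : Finset κ) (p : κ → ι → ℝ) (hp : ∀ k ∈ s, Antitone (p k ∘ σ)) :
    F (∑ k ∈ s, p k) = ∑ k ∈ s, F (p k) := by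
  induction s using Finset.cons_induction with
  | empty => simpa using hF.map_zero
  | cons k s hk ih =>
    have hs : Antitone ((∑ j ∈ s, p j) ∘ σ) :=
      sum_induction _ (fun v => Antitone (v ∘ σ)) (fun _ _ hv hw => hv.add hw) antitone_const
        fun j hj => hp j (mem_cons_of_mem hj)
    rw [sum_cons, sum_cons,
      hF _ _ (Comonotone.of_antitone_comp σ (hp k (mem_cons_self k s)) hs),
      ih fun j hj => hp j (mem_cons_of_mem hj)]

end ComonotoneAdditive

theorem intervalIntegral.integral_eq_sum_of_eqOn_uIoo {a c : ℕ → ℝ} {g : ℝ → ℝ} (m : ℕ)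
    (h : ∀ k < m, EqOn g (fun _ => c k) (uIoo (a (k + 1)) (a k))) :
    ∫ t in a m..a 0, g t = ∑ k ∈ range m, (a k - a (k + 1)) * c k := by
  have hpiece (k : ℕ) (hk : k < m) : EqOn g (fun _ => c k) (uIoo (a k) (a (k + 1))) :=
    uIoo_comm (a k) _ ▸ h k hk
  rw [integral_symm, ← sum_integral_adjacent_intervals fun k hk =>
    (intervalIntegrable_congr_uIoo (hpiece k hk)).2 intervalIntegrable_const, ← sum_neg_distrib]
  refine sum_congr rfl fun k hk => ?_
  rw [integral_congr_uIoo (hpiece k (mem_range.1 hk)), intervalIntegral.integral_const,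
    smul_eq_mul]
  ring

theorem Finset.sum_range_ite_le_sub {M : Type*} [AddCommGroup M] (b : ℕ → M) {j m : ℕ} (h : j ≤ m) :
    ∑ k ∈ range m, (if j ≤ k then b k - b (k + 1) else 0) = b j - b m := by
  rw [← sum_filter, range_eq_Ico, Ico_filter_le, max_eq_right (Nat.zero_le j)]
  simpa only [neg_sub_neg] using sum_Ico_sub (fun k => -b k) h

section SortedVal

variable {n : ℕ} (σ : Equiv.Perm (Fin n))

def sortedVal (x : Fin n → ℝ) (k : ℕ) : ℝ :=
  if h : k < n then x (σ ⟨k, h⟩) else 0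

def initSeg (k : ℕ) : Finset (Fin n) :=
  univ.filter fun i => (σ.symm i : ℕ) ≤ k

variable {σ}

@[simp]
theorem mem_initSeg {k : ℕ} {i : Fin n} : i ∈ initSeg σ k ↔ (σ.symm i : ℕ) ≤ k := by
  simp [initSeg]

theorem sortedVal_symm_apply (x : Fin n → ℝ) (i : Fin n) :
    sortedVal σ x (σ.symm i) = x i := by
  simp [sortedVal]

theorem sortedVal_add (x y : Fin n → ℝ) (k : ℕ) :
    sortedVal σ (x + y) k = sortedVal σ x k + sortedVal σ y k := by
  unfold sortedVal; split_ifs <;> simp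

theorem sortedVal_le_of_le {x : Fin n → ℝ} (hx : Antitone (x ∘ σ)) {j k : ℕ}
    (hjk : j ≤ k) (hk : k < n) : sortedVal σ x k ≤ sortedVal σ x j := by
  rw [sortedVal, sortedVal, dif_pos hk, dif_pos (hjk.trans_lt hk)]
  exact hx (Fin.mk_le_mk.2 hjk)

theorem antitone_indicator_initSeg_comp (k : ℕ) :
    Antitone ((initSeg σ k : Set (Fin n)).indicator (1 : Fin n → ℝ) ∘ σ) := by
  intro a b hab
  simp only [Function.comp, Set.indicator_apply, mem_coe, mem_initSeg, Equiv.symm_apply_apply,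
    Pi.one_apply]
  split_ifs with hb ha <;> first | rfl | norm_num
  exact ha ((Fin.le_def.1 hab).trans hb)

theorem eq_sum_sortedVal_smul_indicator_add (x : Fin n → ℝ) :
    x = (∑ k ∈ range (n - 1), (sortedVal σ x k - sortedVal σ x (k + 1)) •
        (initSeg σ k : Set (Fin n)).indicator (1 : Fin n → ℝ)) +
      fun _ => sortedVal σ x (n - 1) := by
  ext i
  have hi : (σ.symm i : ℕ) ≤ n - 1 := Nat.le_sub_one_of_lt (σ.symm i).2
  simp only [Pi.add_apply, Finset.sum_apply, Pi.smul_apply, smul_eq_mul, Set.indicator_apply,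
    mem_coe, mem_initSeg, Pi.one_apply, mul_ite, mul_one, mul_zero]
  rw [sum_range_ite_le_sub _ hi, sortedVal_symm_apply]
  ring

theorem filter_lt_eq_initSeg {x : Fin n → ℝ} (hx : Antitone (x ∘ σ)) {k : ℕ}
    (hk : k + 1 < n) {t : ℝ} (ht : t ∈ uIoo (sortedVal σ x (k + 1)) (sortedVal σ x k)) :
    univ.filter (fun i => t < x i) = initSeg σ k := by
  rw [uIoo_of_le (sortedVal_le_of_le hx k.le_succ hk)] at ht
  ext i
  simp only [mem_filter, Finset.mem_univ, true_and, mem_initSeg]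
  rw [← sortedVal_symm_apply (σ := σ) x i]
  constructor
  · intro hti
    by_contra! hki
    exact (ht.1.trans hti).not_ge (sortedVal_le_of_le hx hki (σ.symm i).2)
  · intro hik
    exact ht.2.trans_le (sortedVal_le_of_le hx hik (by omega))

theorem lovasz_eq_sum (f : Finset (Fin n) → ℝ) {x : Fin n → ℝ} (hx : Antitone (x ∘ σ)) :
    lovasz f x = ∑ k ∈ range (n - 1),
        (sortedVal σ x k - sortedVal σ x (k + 1)) * f (initSeg σ k) +
      sortedVal σ x (n - 1) * f univ := by
  rcases Nat.eq_zero_or_pos n with rfl | hn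
  · -- both sides vanish: `⨅` and `⨆` over an empty index are `0` in `ℝ`
    simp [lovasz, sortedVal]
  have hmem (k : ℕ) (hk : k < n) : sortedVal σ x k ∈ range x := by
    simp [sortedVal, hk]
  have hinf : ⨅ i, x i = sortedVal σ x (n - 1) := by
    refine IsLeast.csInf_eq ⟨hmem _ (by omega), forall_mem_range.2 fun i => ?_⟩
    rw [← sortedVal_symm_apply x i]
    exact sortedVal_le_of_le hx (by omega) (by omega)
  have hsup : ⨆ i, x i = sortedVal σ x 0 := by
    refine IsGreatest.csSup_eq ⟨hmem 0 hn, forall_mem_range.2 fun i => ?_⟩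
    rw [← sortedVal_symm_apply x i]
    exact sortedVal_le_of_le hx (Nat.zero_le _) (σ.symm i).2
  rw [lovasz, hinf, hsup, mul_comm (f univ),
    intervalIntegral.integral_eq_sum_of_eqOn_uIoo (c := fun k => f (initSeg σ k)) _
      fun k hk t ht => congrArg f (filter_lt_eq_initSeg hx (by omega) ht)]

end SortedVal

theorem comonotoneAdditive_lovasz {n : ℕ} (f : Finset (Fin n) → ℝ) :
    ComonotoneAdditive (lovasz f) := by
  intro x y hxy
  obtain ⟨σ, hx, hy⟩ := hxy.exists_antitone_comp
  have hsum : Antitone ((x + y) ∘ σ) := hx.add hy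
  rw [lovasz_eq_sum f hx, lovasz_eq_sum f hy, lovasz_eq_sum f hsum]
  simp only [sortedVal_add, add_sub_add_comm, add_mul, sum_add_distrib]
  ring

theorem ComonotoneAdditive.eq_lovasz {n : ℕ} {F : (Fin n → ℝ) → ℝ}
    (hF : ComonotoneAdditive F) (hcont : Continuous F) :
    F = lovasz fun A => F ((A : Set (Fin n)).indicator 1) := by
  funext x
  obtain ⟨σ, hx, -⟩ := (Comonotone.refl x).exists_antitone_comp
  have hcoef {k : ℕ} (hk : k ∈ range (n - 1)) :
      0 ≤ sortedVal σ x k - sortedVal σ x (k + 1) :=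
    sub_nonneg.2 (sortedVal_le_of_le hx k.le_succ (by simp at hk; omega))
  rw [lovasz_eq_sum _ hx]
  conv_lhs => rw [eq_sum_sortedVal_smul_indicator_add (σ := σ) x]
  rw [hF _ _ (Comonotone.const_right _ _), hF.map_const hcont, coe_univ, Set.indicator_univ,
    hF.map_sum_of_antitone_comp σ _ _ ?_]
  · exact congrArg (· + _) (sum_congr rfl fun k hk => hF.map_smul_of_nonneg hcont _ (hcoef hk))
  · exact fun k hk a b hab =>
      mul_le_mul_of_nonneg_left (antitone_indicator_initSeg_comp k hab) (hcoef hk)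

theorem lovasz_iff_comonotone_additive_general {n : ℕ}
    (F : (Fin n → ℝ) → ℝ) (hF : Continuous F) :
    (∃ f : Finset (Fin n) → ℝ, F = lovasz f) ↔
      (∀ x y : Fin n → ℝ,
        (∀ i j : Fin n, 0 ≤ (x i - x j) * (y i - y j)) → F (x + y) = F x + F y) :=
  ⟨fun ⟨f, hf⟩ => hf ▸ comonotoneAdditive_lovasz f,
    fun h => ⟨_, ComonotoneAdditive.eq_lovasz h hF⟩⟩

/-- A continuous `F : ℝⁿ → ℝ` is the Lovász extension of some set function iff
it is comonotonic additive. -/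
theorem lovasz_iff_comonotone_additive {n : ℕ} (hn : 1 ≤ n)
    (F : (Fin n → ℝ) → ℝ) (hF : Continuous F) :
    (∃ f : Finset (Fin n) → ℝ, F = lovasz f) ↔
      (∀ x y : Fin n → ℝ,
        (∀ i j : Fin n, 0 ≤ (x i - x j) * (y i - y j)) → F (x + y) = F x + F y) :=
  lovasz_iff_comonotone_additive_general F hF
end

section
/- A continuous function F : ℝ^n → ℝ is the disjoint-pair Lovász extension F = f^L of some function f : P_2(V) → ℝ with f(∅,∅) = 0 if and only if F(x + y) = F(x) + F(y) whenever x and y are absolutely comonotonic (meaning x_i y_i ≥ 0 for all i, and (|x_i| − |x_j|)(|y_i| − |y_j|) ≥ 0 for all i, j). -/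
/-!
Absolutely comonotone vectors are exactly the nonnegative combinations `∑ c k • 1_{A k, B k}`
of one chain of disjoint pairs `(A 0, B 0) ⊇ (A 1, B 1) ⊇ ⋯`: sorting the coordinates by
`|x i| + |y i|` sorts `|x|` and `|y|` at once, and the chain consists of the sign-split tails of
that order. On such a combination the integrand of `f^L` is `f (A k) (B k)` on the `k`-th layer
`(∑_{j<k} c j, ∑_{j≤k} c j)`, so `f^L (∑ c k • 1_{A k, B k}) = ∑ c k * f (A k) (B k)`, which is
additive in `c`. Conversely, a comonotone additive `F` is additive along a chain and, being
continuous, positively homogeneous (Cauchy's equation on a ray), so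
`F x = ∑ c k * F 1_{A k, B k} = f^L x` with `f A B = F 1_{A,B}`.
-/

open Finset

/-- The disjoint-pair Lovász extension of `f : 𝒫₂(V) → ℝ` (given as a function of two
finsets, only its values on disjoint pairs are used):
`f^L(x) = ∫_0^{‖x‖_∞} f(V_+^t(x), V_-^t(x)) dt`, where `V_±^t(x) = {i : ±x_i > t}`. -/
noncomputable def dpLovasz {n : ℕ} (f : Finset (Fin n) → Finset (Fin n) → ℝ)
    (x : Fin n → ℝ) : ℝ :=
  ∫ t in (0:ℝ)..(⨆ i, |x i|),
    f (Finset.univ.filter (fun i => t < x i)) (Finset.univ.filter (fun i => t < -x i))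


open MeasureTheory

section Comonotone

variable {ι : Type*}

def AbsComonotone (x y : ι → ℝ) : Prop :=
  (∀ i, 0 ≤ x i * y i) ∧ ∀ i j, 0 ≤ (|x i| - |x j|) * (|y i| - |y j|)

theorem absComonotone_smul (v : ι → ℝ) {a b : ℝ} (ha : 0 ≤ a) (hb : 0 ≤ b) :
    AbsComonotone (a • v) (b • v) := by
  constructor
  · intro i
    have : (a • v) i * (b • v) i = a * b * (v i * v i) := by
      simp only [Pi.smul_apply, smul_eq_mul]; ring
    rw [this]
    exact mul_nonneg (mul_nonneg ha hb) (mul_self_nonneg _)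
  · intro i j
    have : (|(a • v) i| - |(a • v) j|) * (|(b • v) i| - |(b • v) j|)
        = a * b * ((|v i| - |v j|) * (|v i| - |v j|)) := by
      simp only [Pi.smul_apply, smul_eq_mul, abs_mul, abs_of_nonneg ha, abs_of_nonneg hb]; ring
    rw [this]
    exact mul_nonneg (mul_nonneg ha hb) (mul_self_nonneg _)

theorem eq_mul_of_continuous_of_add_of_nonneg {h : ℝ → ℝ} (hh : Continuous h)
    (hadd : ∀ a b, 0 ≤ a → 0 ≤ b → h (a + b) = h a + h b) {c : ℝ} (hc : 0 ≤ c) :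
    h c = c * h 1 := by
  have h0 : h 0 = 0 := by simpa using hadd 0 0 le_rfl le_rfl
  have hadd₃ : ∀ a b c, 0 ≤ a → 0 ≤ b → 0 ≤ c → h (a + (b + c)) = h a + (h b + h c) :=
    fun a b c ha hb hc => by rw [hadd _ _ ha (add_nonneg hb hc), hadd _ _ hb hc]
  -- `a ↦ h a⁺ - h a⁻` is an additive extension of `h` to all of `ℝ`
  let G : ℝ →+ ℝ := AddMonoidHom.mk' (fun a => h a⁺ - h a⁻) fun a b => by
    have key : (a + b)⁺ + (a⁻ + b⁻) = a⁺ + (b⁺ + (a + b)⁻) := by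
      linarith [posPart_sub_negPart a, posPart_sub_negPart b, posPart_sub_negPart (a + b)]
    have := congrArg h key
    rw [hadd₃ _ _ _ (posPart_nonneg _) (negPart_nonneg _) (negPart_nonneg _),
      hadd₃ _ _ _ (posPart_nonneg _) (posPart_nonneg _) (negPart_nonneg _)] at this
    linarith
  have hG : Continuous G := (hh.comp continuous_posPart).sub (hh.comp continuous_negPart)
  simpa [G, h0, hc] using map_real_smul G hG c 1

variable {F : (ι → ℝ) → ℝ}

theorem map_zero_of_absComonotone_add
    (hadd : ∀ x y, AbsComonotone x y → F (x + y) = F x + F y) : F 0 = 0 := by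
  simpa using hadd 0 0 ⟨fun _ => by simp, fun _ _ => by simp⟩

theorem map_smul_of_absComonotone_add (hF : Continuous F)
    (hadd : ∀ x y, AbsComonotone x y → F (x + y) = F x + F y) (v : ι → ℝ) {c : ℝ}
    (hc : 0 ≤ c) : F (c • v) = c * F v := by
  simpa using eq_mul_of_continuous_of_add_of_nonneg (h := fun a => F (a • v))
    (hF.comp (continuous_id.smul continuous_const))
    (fun a b ha hb => by simpa only [add_smul] using hadd _ _ (absComonotone_smul v ha hb)) hc

end Comonotone

theorem Antitone.forall_mem_imp_or {α κ : Type*} [LinearOrder κ] {C : κ → Finset α}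
    (hC : Antitone C) (i j : α) :
    (∀ k, i ∈ C k → j ∈ C k) ∨ ∀ k, j ∈ C k → i ∈ C k := by
  by_contra! h
  obtain ⟨⟨k, hik, hjk⟩, l, hjl, hil⟩ := h
  rcases le_total k l with hkl | hlk
  · exact hjk (hC hkl hjl)
  · exact hil (hC hlk hik)

section PairIndicator

variable {ι : Type*} [DecidableEq ι]

def pairIndicator (A B : Finset ι) : ι → ℝ :=
  fun i => (if i ∈ A then 1 else 0) - (if i ∈ B then 1 else 0)

theorem pairIndicator_empty : pairIndicator (∅ : Finset ι) ∅ = 0 := by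
  ext; simp [pairIndicator]

theorem neg_pairIndicator (A B : Finset ι) : -pairIndicator A B = pairIndicator B A := by
  ext; simp [pairIndicator]

variable {A B : Finset ι} {i j : ι}

theorem pairIndicator_apply_of_mem_of_notMem (hA : i ∈ A) (hB : i ∉ B) :
    pairIndicator A B i = 1 := by
  simp [pairIndicator, hA, hB]

theorem pairIndicator_apply_nonneg (hB : i ∉ B) : 0 ≤ pairIndicator A B i := by
  unfold pairIndicator; split_ifs <;> norm_num

theorem pairIndicator_apply_nonpos (hA : i ∉ A) : pairIndicator A B i ≤ 0 := by
  unfold pairIndicator; split_ifs <;> norm_num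

theorem abs_pairIndicator_apply (h : Disjoint A B) (i : ι) :
    |pairIndicator A B i| = if i ∈ A ∪ B then 1 else 0 := by
  have := fun hA : i ∈ A => Finset.disjoint_left.mp h hA
  by_cases hA : i ∈ A <;> by_cases hB : i ∈ B <;> simp_all [pairIndicator]

theorem abs_pairIndicator_apply_le_one (h : Disjoint A B) (i : ι) :
    |pairIndicator A B i| ≤ 1 := by
  rw [abs_pairIndicator_apply h]; split_ifs <;> norm_num

theorem abs_pairIndicator_apply_le (h : Disjoint A B) (hij : i ∈ A ∪ B → j ∈ A ∪ B) :
    |pairIndicator A B i| ≤ |pairIndicator A B j| := by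
  rw [abs_pairIndicator_apply h, abs_pairIndicator_apply h]
  split_ifs <;> simp_all

end PairIndicator

structure IsDisjointChain {ι : Type*} (A B : ℕ → Finset ι) : Prop where
  disjoint : ∀ k, Disjoint (A k) (B k)
  antitone_fst : Antitone A
  antitone_snd : Antitone B

namespace IsDisjointChain

variable {ι : Type*} {A B : ℕ → Finset ι}

theorem symm (h : IsDisjointChain A B) : IsDisjointChain B A :=
  ⟨fun k => (h.disjoint k).symm, h.antitone_snd, h.antitone_fst⟩

theorem notMem_snd (h : IsDisjointChain A B) {i : ι} {k : ℕ} (hi : i ∈ A k) (j : ℕ) :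
    i ∉ B j := by
  intro hj
  rcases le_total j k with hjk | hkj
  · exact disjoint_left.mp (h.disjoint j) (h.antitone_fst hjk hi) hj
  · exact disjoint_left.mp (h.disjoint k) hi (h.antitone_snd hkj hj)

variable [DecidableEq ι]

theorem antitone_union (h : IsDisjointChain A B) : Antitone fun k => A k ∪ B k :=
  fun _ _ hkl => union_subset_union (h.antitone_fst hkl) (h.antitone_snd hkl)

theorem pairIndicator_apply_nonneg_or_nonpos (h : IsDisjointChain A B) (i : ι) :
    (∀ k, 0 ≤ pairIndicator (A k) (B k) i) ∨ ∀ k, pairIndicator (A k) (B k) i ≤ 0 := by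
  by_cases hA : ∃ k, i ∈ A k
  · obtain ⟨k, hk⟩ := hA
    exact .inl fun j => pairIndicator_apply_nonneg (h.notMem_snd hk j)
  · exact .inr fun j => pairIndicator_apply_nonpos (not_exists.mp hA j)

variable {s : Finset ℕ} {c : ℕ → ℝ}

theorem abs_sum_smul_pairIndicator_apply (h : IsDisjointChain A B)
    (hc : ∀ k ∈ s, 0 ≤ c k) (i : ι) :
    |(∑ k ∈ s, c k • pairIndicator (A k) (B k)) i|
      = ∑ k ∈ s, c k * |pairIndicator (A k) (B k) i| := by
  simp only [Finset.sum_apply, Pi.smul_apply, smul_eq_mul]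
  rcases h.pairIndicator_apply_nonneg_or_nonpos i with hi | hi
  · rw [abs_of_nonneg (sum_nonneg fun k hk => mul_nonneg (hc k hk) (hi k))]
    exact sum_congr rfl fun k _ => by rw [abs_of_nonneg (hi k)]
  · rw [abs_of_nonpos (sum_nonpos fun k hk => mul_nonpos_of_nonneg_of_nonpos (hc k hk) (hi k)),
      ← sum_neg_distrib]
    exact sum_congr rfl fun k _ => by rw [abs_of_nonpos (hi k)]; ring

theorem abs_sum_smul_pairIndicator_apply_le (h : IsDisjointChain A B)
    (hc : ∀ k ∈ s, 0 ≤ c k) {i j : ι} (hij : ∀ k, i ∈ A k ∪ B k → j ∈ A k ∪ B k) :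
    |(∑ k ∈ s, c k • pairIndicator (A k) (B k)) i|
      ≤ |(∑ k ∈ s, c k • pairIndicator (A k) (B k)) j| := by
  rw [h.abs_sum_smul_pairIndicator_apply hc, h.abs_sum_smul_pairIndicator_apply hc]
  exact sum_le_sum fun k hk =>
    mul_le_mul_of_nonneg_left (abs_pairIndicator_apply_le (h.disjoint k) (hij k)) (hc k hk)

theorem absComonotone_sum_smul_pairIndicator (h : IsDisjointChain A B) {t : Finset ℕ}
    {d : ℕ → ℝ} (hc : ∀ k ∈ s, 0 ≤ c k) (hd : ∀ k ∈ t, 0 ≤ d k) :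
    AbsComonotone (∑ k ∈ s, c k • pairIndicator (A k) (B k))
      (∑ k ∈ t, d k • pairIndicator (A k) (B k)) := by
  constructor
  · intro i
    simp only [Finset.sum_apply, Pi.smul_apply, smul_eq_mul]
    rcases h.pairIndicator_apply_nonneg_or_nonpos i with hi | hi
    · exact mul_nonneg (sum_nonneg fun k hk => mul_nonneg (hc k hk) (hi k))
        (sum_nonneg fun k hk => mul_nonneg (hd k hk) (hi k))
    · exact mul_nonneg_of_nonpos_of_nonpos
        (sum_nonpos fun k hk => mul_nonpos_of_nonneg_of_nonpos (hc k hk) (hi k))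
        (sum_nonpos fun k hk => mul_nonpos_of_nonneg_of_nonpos (hd k hk) (hi k))
  · intro i j
    rcases h.antitone_union.forall_mem_imp_or i j with hij | hji
    · exact mul_nonneg_of_nonpos_of_nonpos
        (sub_nonpos.mpr (h.abs_sum_smul_pairIndicator_apply_le hc hij))
        (sub_nonpos.mpr (h.abs_sum_smul_pairIndicator_apply_le hd hij))
    · exact mul_nonneg (sub_nonneg.mpr (h.abs_sum_smul_pairIndicator_apply_le hc hji))
        (sub_nonneg.mpr (h.abs_sum_smul_pairIndicator_apply_le hd hji))

theorem map_sum_smul_pairIndicator {F : (ι → ℝ) → ℝ} (hF : Continuous F)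
    (hadd : ∀ x y, AbsComonotone x y → F (x + y) = F x + F y) (h : IsDisjointChain A B)
    (hc : ∀ k ∈ s, 0 ≤ c k) :
    F (∑ k ∈ s, c k • pairIndicator (A k) (B k))
      = ∑ k ∈ s, c k * F (pairIndicator (A k) (B k)) := by
  induction s using Finset.induction_on with
  | empty => simpa using map_zero_of_absComonotone_add hadd
  | insert a s ha ih =>
    have hca : 0 ≤ c a := hc a (mem_insert_self a s)
    have hcs : ∀ k ∈ s, 0 ≤ c k := fun k hk => hc k (mem_insert_of_mem hk)
    have hcomon := h.absComonotone_sum_smul_pairIndicator (s := {a}) (by simpa using hca) hcs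
    rw [sum_singleton] at hcomon
    rw [sum_insert ha, sum_insert ha, hadd _ _ hcomon, ih hcs,
      map_smul_of_absComonotone_add hF hadd _ hca]

variable {m k : ℕ}

theorem sum_range_succ_le_apply (h : IsDisjointChain A B) (hc : ∀ j ∈ range m, 0 ≤ c j)
    (hk : k < m) {i : ι} (hi : i ∈ A k) :
    ∑ j ∈ range (k + 1), c j ≤ (∑ j ∈ range m, c j • pairIndicator (A j) (B j)) i := by
  simp only [Finset.sum_apply, Pi.smul_apply, smul_eq_mul]
  calc ∑ j ∈ range (k + 1), c j = ∑ j ∈ range (k + 1), c j * pairIndicator (A j) (B j) i :=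
        sum_congr rfl fun j hj => by
          rw [pairIndicator_apply_of_mem_of_notMem
            (h.antitone_fst (Nat.lt_succ_iff.mp (mem_range.mp hj)) hi) (h.notMem_snd hi j), mul_one]
    _ ≤ ∑ j ∈ range m, c j * pairIndicator (A j) (B j) i :=
        sum_le_sum_of_subset_of_nonneg (range_subset_range.mpr hk) fun j hj _ =>
          mul_nonneg (hc j hj) (pairIndicator_apply_nonneg (h.notMem_snd hi j))

theorem apply_le_sum_range (h : IsDisjointChain A B) (hc : ∀ j ∈ range m, 0 ≤ c j)
    (hk : k ≤ m) {i : ι} (hi : i ∉ A k) :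
    (∑ j ∈ range m, c j • pairIndicator (A j) (B j)) i ≤ ∑ j ∈ range k, c j := by
  simp only [Finset.sum_apply, Pi.smul_apply, smul_eq_mul]
  rw [← sum_range_add_sum_Ico _ hk]
  have hlow : ∑ j ∈ range k, c j * pairIndicator (A j) (B j) i ≤ ∑ j ∈ range k, c j :=
    sum_le_sum fun j hj => by
      have hcj := hc j (mem_range.mpr ((mem_range.mp hj).trans_le hk))
      exact mul_le_of_le_one_right hcj
        ((le_abs_self _).trans (abs_pairIndicator_apply_le_one (h.disjoint j) i))
  have hhigh : ∑ j ∈ Ico k m, c j * pairIndicator (A j) (B j) i ≤ 0 :=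
    sum_nonpos fun j hj => mul_nonpos_of_nonneg_of_nonpos
      (hc j (mem_range.mpr (mem_Ico.mp hj).2))
      (pairIndicator_apply_nonpos fun hij => hi (h.antitone_fst (mem_Ico.mp hj).1 hij))
  linarith

theorem abs_apply_le_sum_range (h : IsDisjointChain A B) (hc : ∀ j ∈ range m, 0 ≤ c j)
    (i : ι) : |(∑ j ∈ range m, c j • pairIndicator (A j) (B j)) i| ≤ ∑ j ∈ range m, c j := by
  rw [h.abs_sum_smul_pairIndicator_apply hc]
  exact sum_le_sum fun j hj =>
    mul_le_of_le_one_right (hc j hj) (abs_pairIndicator_apply_le_one (h.disjoint j) i)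

theorem filter_lt_sum_range_apply [Fintype ι] (h : IsDisjointChain A B)
    (hc : ∀ j ∈ range m, 0 ≤ c j) (hk : k < m) {t : ℝ}
    (ht : t ∈ Set.Ioo (∑ j ∈ range k, c j) (∑ j ∈ range (k + 1), c j)) :
    univ.filter (fun i => t < (∑ j ∈ range m, c j • pairIndicator (A j) (B j)) i) = A k := by
  ext i
  simp only [mem_filter, mem_univ, true_and]
  refine ⟨fun hti => ?_, fun hi => ht.2.trans_le (h.sum_range_succ_le_apply hc hk hi)⟩
  by_contra hi
  exact lt_asymm hti ((h.apply_le_sum_range hc hk.le hi).trans_lt ht.1)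

end IsDisjointChain

section StepFunction

variable {g : ℝ → ℝ} {m : ℕ} {s v : ℕ → ℝ}

theorem intervalIntegrable_of_eqOn_Ioo {a b c : ℝ} (hab : a ≤ b)
    (hg : Set.EqOn g (fun _ => c) (Set.Ioo a b)) : IntervalIntegrable g volume a b :=
  (intervalIntegrable_congr_uIoo (by rwa [Set.uIoo_of_le hab])).mpr intervalIntegrable_const

theorem intervalIntegrable_of_forall_eqOn_Ioo (hs : ∀ k < m, s k ≤ s (k + 1))
    (hg : ∀ k < m, Set.EqOn g (fun _ => v k) (Set.Ioo (s k) (s (k + 1)))) :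
    IntervalIntegrable g volume (s 0) (s m) :=
  IntervalIntegrable.trans_iterate fun k hk => intervalIntegrable_of_eqOn_Ioo (hs k hk) (hg k hk)

theorem intervalIntegral_eq_sum_of_forall_eqOn_Ioo (hs : ∀ k < m, s k ≤ s (k + 1))
    (hg : ∀ k < m, Set.EqOn g (fun _ => v k) (Set.Ioo (s k) (s (k + 1)))) :
    ∫ t in s 0..s m, g t = ∑ k ∈ range m, (s (k + 1) - s k) * v k := by
  rw [← intervalIntegral.sum_integral_adjacent_intervals fun k hk =>
    intervalIntegrable_of_eqOn_Ioo (hs k hk) (hg k hk)]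
  refine sum_congr rfl fun k hk => ?_
  rw [intervalIntegral.integral_congr_Ioo_of_le (hs k (mem_range.mp hk)) (hg k (mem_range.mp hk)),
    intervalIntegral.integral_const, smul_eq_mul]

end StepFunction

section LayerCake

variable {n : ℕ} {f : Finset (Fin n) → Finset (Fin n) → ℝ} {x : Fin n → ℝ}

noncomputable def dpLevel (f : Finset (Fin n) → Finset (Fin n) → ℝ) (x : Fin n → ℝ) (t : ℝ) :
    ℝ :=
  f (univ.filter fun i => t < x i) (univ.filter fun i => t < -x i)

theorem dpLevel_of_forall_abs_le {t : ℝ} (hx : ∀ i, |x i| ≤ t) : dpLevel f x t = f ∅ ∅ := by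
  unfold dpLevel
  congr 1 <;> refine filter_false_of_mem fun i _ => not_lt.mpr ?_
  · exact (le_abs_self _).trans (hx i)
  · exact (neg_le_abs _).trans (hx i)

theorem dpLovasz_eq_integral_dpLevel (hf : f ∅ ∅ = 0) {S : ℝ} (hS0 : 0 ≤ S)
    (hS : ∀ i, |x i| ≤ S) (hint : IntervalIntegrable (dpLevel f x) volume 0 S) :
    dpLovasz f x = ∫ t in 0..S, dpLevel f x t := by
  set M := ⨆ i, |x i|
  have hM : ∀ i, |x i| ≤ M := le_ciSup (Set.finite_range _).bddAbove
  have hM0 : 0 ≤ M := Real.iSup_nonneg fun i => abs_nonneg _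
  have hMS : M ≤ S := Real.iSup_le hS hS0
  have hzero : ∫ t in M..S, dpLevel f x t = 0 := by
    rw [intervalIntegral.integral_congr (g := fun _ => 0) fun t ht => ?_,
      intervalIntegral.integral_zero]
    rw [Set.uIcc_of_le hMS] at ht
    exact (dpLevel_of_forall_abs_le fun i => (hM i).trans ht.1).trans hf
  have hsub : Set.uIcc 0 M ⊆ Set.uIcc 0 S :=
    Set.uIcc_subset_uIcc Set.left_mem_uIcc (Set.mem_uIcc_of_le hM0 hMS)
  have hsub' : Set.uIcc M S ⊆ Set.uIcc 0 S :=
    Set.uIcc_subset_uIcc (Set.mem_uIcc_of_le hM0 hMS) Set.right_mem_uIcc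
  rw [← intervalIntegral.integral_add_adjacent_intervals (hint.mono_set hsub)
    (hint.mono_set hsub'), hzero, add_zero]
  rfl

variable {A B : ℕ → Finset (Fin n)} {m : ℕ} {c : ℕ → ℝ}

theorem dpLovasz_sum_smul_pairIndicator (hf : f ∅ ∅ = 0) (h : IsDisjointChain A B)
    (hc : ∀ k ∈ range m, 0 ≤ c k) :
    dpLovasz f (∑ k ∈ range m, c k • pairIndicator (A k) (B k))
      = ∑ k ∈ range m, c k * f (A k) (B k) := by
  set x := ∑ k ∈ range m, c k • pairIndicator (A k) (B k)
  set s : ℕ → ℝ := fun k => ∑ j ∈ range k, c j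
  have hsucc : ∀ k, s (k + 1) - s k = c k := fun k => by simp [s, sum_range_succ]
  have hs : ∀ k < m, s k ≤ s (k + 1) := fun k hk => by
    linarith [hsucc k, hc k (mem_range.mpr hk)]
  have hneg : -x = ∑ k ∈ range m, c k • pairIndicator (B k) (A k) := by
    simp only [x, ← sum_neg_distrib, ← smul_neg, neg_pairIndicator]
  have hlevel : ∀ k < m,
      Set.EqOn (dpLevel f x) (fun _ => f (A k) (B k)) (Set.Ioo (s k) (s (k + 1))) :=
    fun k hk t ht => by
      have hB := h.symm.filter_lt_sum_range_apply hc hk ht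
      rw [← hneg] at hB
      exact congrArg₂ f (h.filter_lt_sum_range_apply hc hk ht) hB
  have hint := intervalIntegrable_of_forall_eqOn_Ioo hs hlevel
  have hintegral := intervalIntegral_eq_sum_of_forall_eqOn_Ioo hs hlevel
  have hs0 : s 0 = 0 := sum_range_zero _
  rw [hs0] at hint hintegral
  rw [dpLovasz_eq_integral_dpLevel hf (sum_nonneg hc) (h.abs_apply_le_sum_range hc) hint,
    hintegral]
  simp only [hsucc]

end LayerCake

section Decomposition

variable {n : ℕ}

def rankTail (σ : Equiv.Perm (Fin n)) (k : ℕ) : Finset (Fin n) :=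
  univ.filter fun i => k ≤ (σ.symm i : ℕ)

theorem isDisjointChain_rankTail (σ : Equiv.Perm (Fin n)) (P : Finset (Fin n)) :
    IsDisjointChain (fun k => P ∩ rankTail σ k) (fun k => Pᶜ ∩ rankTail σ k) := by
  have hanti : Antitone (rankTail σ) := fun k l hkl i hi => by
    simp only [rankTail, mem_filter, mem_univ, true_and] at hi ⊢
    exact hkl.trans hi
  exact ⟨fun k => disjoint_compl_right.mono inter_subset_left inter_subset_left,
    fun k l hkl => inter_subset_inter subset_rfl (hanti hkl),
    fun k l hkl => inter_subset_inter subset_rfl (hanti hkl)⟩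

noncomputable def sortedAbs (σ : Equiv.Perm (Fin n)) (x : Fin n → ℝ) : ℕ → ℝ
  | 0 => 0
  | k + 1 => if h : k < n then |x (σ ⟨k, h⟩)| else 0

variable {σ : Equiv.Perm (Fin n)} {x : Fin n → ℝ}

theorem sortedAbs_le_succ (hσ : Monotone fun k => |x (σ k)|) {k : ℕ} (hk : k < n) :
    sortedAbs σ x k ≤ sortedAbs σ x (k + 1) := by
  cases k with
  | zero => simp [sortedAbs, hk]
  | succ k =>
    simp only [sortedAbs, dif_pos hk, dif_pos (k.lt_succ_self.trans hk)]
    exact hσ (Fin.mk_le_mk.mpr k.le_succ)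

theorem eq_sum_sortedAbs_smul_pairIndicator (σ : Equiv.Perm (Fin n)) (P : Finset (Fin n))
    (hpos : ∀ i ∈ P, 0 ≤ x i) (hneg : ∀ i ∉ P, x i ≤ 0) :
    x = ∑ k ∈ range n, (sortedAbs σ x (k + 1) - sortedAbs σ x k) •
      pairIndicator (P ∩ rankTail σ k) (Pᶜ ∩ rankTail σ k) := by
  ext i
  set r := (σ.symm i : ℕ)
  have hr : r < n := (σ.symm i).isLt
  have hind : ∀ k, pairIndicator (P ∩ rankTail σ k) (Pᶜ ∩ rankTail σ k) i
      = (if k ≤ r then 1 else 0) * (if i ∈ P then 1 else -1) := by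
    intro k
    by_cases hP : i ∈ P <;> by_cases hk : k ≤ r <;> simp [pairIndicator, rankTail, hP, hk, r]
  have htel : ∑ k ∈ range n, (if k ≤ r then sortedAbs σ x (k + 1) - sortedAbs σ x k else 0)
      = |x i| := by
    rw [← sum_filter, show (range n).filter (· ≤ r) = range (r + 1) by ext; simp; omega,
      sum_range_sub]
    simp [sortedAbs, hr, r]
  have hsum : (∑ k ∈ range n, (sortedAbs σ x (k + 1) - sortedAbs σ x k) •
      pairIndicator (P ∩ rankTail σ k) (Pᶜ ∩ rankTail σ k)) i
      = (∑ k ∈ range n, (if k ≤ r then sortedAbs σ x (k + 1) - sortedAbs σ x k else 0))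
        * (if i ∈ P then 1 else -1) := by
    simp only [Finset.sum_apply, Pi.smul_apply, smul_eq_mul, hind, sum_mul]
    exact sum_congr rfl fun k _ => by split_ifs <;> ring
  rw [hsum, htel]
  by_cases hP : i ∈ P
  · rw [if_pos hP, mul_one, abs_of_nonneg (hpos i hP)]
  · rw [if_neg hP, abs_of_nonpos (hneg i hP)]; ring

theorem AbsComonotone.exists_common_chain {x y : Fin n → ℝ} (hxy : AbsComonotone x y) :
    ∃ (A B : ℕ → Finset (Fin n)) (c d : ℕ → ℝ), IsDisjointChain A B ∧
      (∀ k ∈ range n, 0 ≤ c k) ∧ (∀ k ∈ range n, 0 ≤ d k) ∧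
      x = ∑ k ∈ range n, c k • pairIndicator (A k) (B k) ∧
      y = ∑ k ∈ range n, d k • pairIndicator (A k) (B k) := by
  set σ := Tuple.sort fun i => |x i| + |y i|
  set P := univ.filter fun i => 0 < x i ∨ 0 < y i
  have hsorted : Monotone (fun k => |x (σ k)|) ∧ Monotone (fun k => |y (σ k)|) := by
    refine ⟨fun a b hab => ?_, fun a b hab => ?_⟩ <;>
    · have hsum : |x (σ a)| + |y (σ a)| ≤ |x (σ b)| + |y (σ b)| :=
        Tuple.monotone_sort (fun i => |x i| + |y i|) hab
      have hprod := hxy.2 (σ a) (σ b)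
      dsimp only
      nlinarith
  have hpos : ∀ i ∈ P, 0 ≤ x i ∧ 0 ≤ y i := fun i hi => by
    rcases (mem_filter.mp hi).2 with hx | hy
    · exact ⟨hx.le, (mul_nonneg_iff_of_pos_left hx).mp (hxy.1 i)⟩
    · exact ⟨(mul_nonneg_iff_of_pos_right hy).mp (hxy.1 i), hy.le⟩
  have hneg : ∀ i ∉ P, x i ≤ 0 ∧ y i ≤ 0 := fun i hi => by
    simpa [P, not_or] using hi
  exact ⟨_, _, _, _, isDisjointChain_rankTail σ P,
    fun k hk => sub_nonneg.mpr (sortedAbs_le_succ hsorted.1 (mem_range.mp hk)),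
    fun k hk => sub_nonneg.mpr (sortedAbs_le_succ hsorted.2 (mem_range.mp hk)),
    eq_sum_sortedAbs_smul_pairIndicator σ P (fun i hi => (hpos i hi).1) fun i hi => (hneg i hi).1,
    eq_sum_sortedAbs_smul_pairIndicator σ P (fun i hi => (hpos i hi).2) fun i hi => (hneg i hi).2⟩

end Decomposition

section Characterization

variable {n : ℕ}

theorem dpLovasz_add_of_absComonotone {f : Finset (Fin n) → Finset (Fin n) → ℝ}
    (hf : f ∅ ∅ = 0) {x y : Fin n → ℝ} (hxy : AbsComonotone x y) :
    dpLovasz f (x + y) = dpLovasz f x + dpLovasz f y := by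
  obtain ⟨A, B, c, d, h, hc, hd, rfl, rfl⟩ := hxy.exists_common_chain
  rw [← sum_add_distrib]
  simp_rw [← add_smul]
  rw [dpLovasz_sum_smul_pairIndicator hf h fun k hk => add_nonneg (hc k hk) (hd k hk),
    dpLovasz_sum_smul_pairIndicator hf h hc, dpLovasz_sum_smul_pairIndicator hf h hd,
    ← sum_add_distrib]
  simp_rw [add_mul]

theorem eq_dpLovasz_of_absComonotone_add {F : (Fin n → ℝ) → ℝ} (hF : Continuous F)
    (hadd : ∀ x y, AbsComonotone x y → F (x + y) = F x + F y) :
    F = dpLovasz fun A B => F (pairIndicator A B) := by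
  funext x
  obtain ⟨A, B, c, -, h, hc, -, hx, -⟩ :=
    AbsComonotone.exists_common_chain (x := x) (y := x)
      ⟨fun i => mul_self_nonneg _, fun i j => mul_self_nonneg _⟩
  have hF0 : F (pairIndicator ∅ ∅) = 0 := by
    rw [pairIndicator_empty]; exact map_zero_of_absComonotone_add hadd
  rw [hx, h.map_sum_smul_pairIndicator hF hadd hc, dpLovasz_sum_smul_pairIndicator hF0 h hc]

end Characterization

theorem dpLovasz_iff_absolutely_comonotone_additive_general {n : ℕ}
    (F : (Fin n → ℝ) → ℝ) (hF : Continuous F) :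
    (∃ f : Finset (Fin n) → Finset (Fin n) → ℝ, f ∅ ∅ = 0 ∧ F = dpLovasz f) ↔
      (∀ x y : Fin n → ℝ,
        (∀ i : Fin n, 0 ≤ x i * y i) →
        (∀ i j : Fin n, 0 ≤ (|x i| - |x j|) * (|y i| - |y j|)) →
        F (x + y) = F x + F y) := by
  constructor
  · rintro ⟨f, hf, rfl⟩ x y hsign habs
    exact dpLovasz_add_of_absComonotone hf ⟨hsign, habs⟩
  · intro hadd
    replace hadd : ∀ x y, AbsComonotone x y → F (x + y) = F x + F y :=
      fun x y hxy => hadd x y hxy.1 hxy.2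
    refine ⟨fun A B => F (pairIndicator A B), ?_, eq_dpLovasz_of_absComonotone_add hF hadd⟩
    show F (pairIndicator ∅ ∅) = 0
    rw [pairIndicator_empty]
    exact map_zero_of_absComonotone_add hadd

/-- A continuous `F : ℝⁿ → ℝ` is the disjoint-pair Lovász extension of some
`f : 𝒫₂(V) → ℝ` with `f(∅,∅) = 0` iff `F(x+y) = F(x)+F(y)` whenever `x, y` are
absolutely comonotonic. -/
theorem dpLovasz_iff_absolutely_comonotone_additive {n : ℕ} (hn : 1 ≤ n)
    (F : (Fin n → ℝ) → ℝ) (hF : Continuous F) :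
    (∃ f : Finset (Fin n) → Finset (Fin n) → ℝ, f ∅ ∅ = 0 ∧ F = dpLovasz f) ↔
      (∀ x y : Fin n → ℝ,
        (∀ i : Fin n, 0 ≤ x i * y i) →
        (∀ i j : Fin n, 0 ≤ (|x i| - |x j|) * (|y i| - |y j|)) →
        F (x + y) = F x + F y) :=
  dpLovasz_iff_absolutely_comonotone_additive_general F hF
end

section
/- Under the k-way setting below: (i) the feasible domain D_𝒜 is closed under the componentwise lattice operations ∨ (componentwise maximum) and ∧ (componentwise minimum); (ii) the following are equivalent: (a) f is k-way submodular on 𝒜; (b) the k-way Lovász extension f^L is convex on every convex subset of D_𝒜, i.e., for all x, y ∈ D_𝒜 and λ ∈ [0,1] such that the segment from x to y lies in D_𝒜, f^L(λx + (1−λ)y) ≤ λ f^L(x) + (1−λ) f^L(y); (c) f^L is submodular on D_𝒜, i.e., f^L(x) + f^L(y) ≥ f^L(x ∨ y) + f^L(x ∧ y) for all x, y ∈ D_𝒜. -/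
/-!
Everything goes through the layer-cake formula `f^L(x) = ∫₀^M f({x > t}) dt`, valid for
`0 ≤ x ≤ M` because `f(∅) = 0`. The level sets of `x ⊔ y` and `x ⊓ y` are the unions and
intersections of those of `x` and `y`, which gives (i) and (a) ⇒ (c). On indicator vectors the
extension recovers `f`, and `f^L((1_A + 1_B)/2) = (f(A ∪ B) + f(A ∩ B))/2`; testing (b) and (c)
on indicator vectors gives the converses.

For (a) ⇒ (b), let `z = λx + (1-λ)y` and order the ground set lexicographically by the values of
`(z, x, y)`. The upper sets of this preorder are lattice expressions in level sets of `z`, `x`, `y`,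
hence lie in `𝒜`. The greedy vector `w` of Edmonds for this chain has `w(S) = f(S)` on the chain,
which contains the level sets of `z`, and, by submodularity, `w(S) ≤ f(S)` on every `S ∈ 𝒜` that
is a union of classes of the preorder, such as the level sets of `x` and `y`. Integrating,
`f^L(z) ≤ ⟨w, z⟩ = λ⟨w, x⟩ + (1-λ)⟨w, y⟩ ≤ λ f^L(x) + (1-λ) f^L(y)`.
-/

open Finset

/-- The `k`-way Lovász extension of `f : 𝒫(V₁)×⋯×𝒫(V_k) → ℝ`. -/
noncomputable def kwayLovasz {k : ℕ} {n : Fin k → ℕ}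
    (f : (∀ i, Finset (Fin (n i))) → ℝ) (x : ∀ i, Fin (n i) → ℝ) : ℝ :=
  (∫ t in (⨅ i, ⨅ j, x i j)..(⨆ i, ⨆ j, x i j),
      f (fun i => Finset.univ.filter (fun j => t < x i j))) +
    f (fun _ => Finset.univ) * (⨅ i, ⨅ j, x i j)

open MeasureTheory

namespace KwayLovasz

def IsSubmodularOn {β : Type*} [Lattice β] (𝒜 : Set β) (f : β → ℝ) : Prop :=
  ∀ A ∈ 𝒜, ∀ B ∈ 𝒜, f (A ⊔ B) + f (A ⊓ B) ≤ f A + f B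

variable {ι : Type*} {α : ι → Type*}

section LevelSets

variable [∀ i, Fintype (α i)] {β γ : Type*} [LinearOrder β] [LinearOrder γ]

/-- The tuple `(V₁^c(v), …, V_k^c(v))` of strict upper level sets. -/
def gtSet (v : ∀ i, α i → β) (c : β) : ∀ i, Finset (α i) :=
  fun i => univ.filter (c < v i ·)

def geSet (v : ∀ i, α i → β) (c : β) : ∀ i, Finset (α i) :=
  fun i => univ.filter (c ≤ v i ·)

def eqSet (v : ∀ i, α i → β) (c : β) : ∀ i, Finset (α i) :=
  fun i => univ.filter (v i · = c)

@[simp] lemma mem_gtSet {v : ∀ i, α i → β} {c : β} {i : ι} {j : α i} :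
    j ∈ gtSet v c i ↔ c < v i j := by simp [gtSet]

@[simp] lemma mem_geSet {v : ∀ i, α i → β} {c : β} {i : ι} {j : α i} :
    j ∈ geSet v c i ↔ c ≤ v i j := by simp [geSet]

@[simp] lemma mem_eqSet {v : ∀ i, α i → β} {c : β} {i : ι} {j : α i} :
    j ∈ eqSet v c i ↔ v i j = c := by simp [eqSet]

lemma gtSet_le_geSet (v : ∀ i, α i → β) (c : β) : gtSet v c ≤ geSet v c :=
  fun i j => by simpa using le_of_lt

lemma disjoint_gtSet_eqSet (v : ∀ i, α i → β) (c : β) : Disjoint (gtSet v c) (eqSet v c) :=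
  Pi.disjoint_iff.2 fun i => disjoint_left.2 fun j => by simp +contextual [ne_of_gt]

lemma eqSet_le_or_disjoint_gtSet_comp {K : Type*} [LinearOrder K] (κ : ∀ i, α i → K)
    (g : K → β) (t : β) (c : K) :
    eqSet κ c ≤ gtSet (fun i j => g (κ i j)) t ∨
      Disjoint (gtSet (fun i j => g (κ i j)) t) (eqSet κ c) := by
  by_cases h : t < g c
  · exact .inl fun i j hj => by simp_all
  · exact .inr <| Pi.disjoint_iff.2 fun i => disjoint_left.2 fun j hj hj' => h (by simp_all)

variable [∀ i, DecidableEq (α i)]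

lemma geSet_eq_gtSet_sup_eqSet (v : ∀ i, α i → β) (c : β) :
    geSet v c = gtSet v c ⊔ eqSet v c := by
  ext i j
  simp [le_iff_lt_or_eq, eq_comm]

lemma gtSet_sup (x y : ∀ i, α i → β) (c : β) : gtSet (x ⊔ y) c = gtSet x c ⊔ gtSet y c := by
  ext i j
  simp

lemma gtSet_inf (x y : ∀ i, α i → β) (c : β) : gtSet (x ⊓ y) c = gtSet x c ⊓ gtSet y c := by
  ext i j
  simp

private lemma lt_or_eq_and_iff {a b : β} {P : Prop} :
    a < b ∨ a = b ∧ P ↔ a < b ∨ a ≤ b ∧ P := by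
  rw [le_iff_lt_or_eq]
  tauto

lemma gtSet_toLex (p : ∀ i, α i → β) (q : ∀ i, α i → γ) (c : β ×ₗ γ) :
    gtSet (fun i j => toLex (p i j, q i j)) c =
      gtSet p (ofLex c).1 ⊔ (geSet p (ofLex c).1 ⊓ gtSet q (ofLex c).2) := by
  ext i j
  simp [Prod.Lex.lt_iff, lt_or_eq_and_iff]

lemma geSet_toLex (p : ∀ i, α i → β) (q : ∀ i, α i → γ) (c : β ×ₗ γ) :
    geSet (fun i j => toLex (p i j, q i j)) c =
      gtSet p (ofLex c).1 ⊔ (geSet p (ofLex c).1 ⊓ geSet q (ofLex c).2) := by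
  ext i j
  simp [Prod.Lex.le_iff, lt_or_eq_and_iff]

end LevelSets

section Domain

variable [∀ i, Fintype (α i)] {𝒜 : Set (∀ i, Finset (α i))}

def LevelSetsIn {β : Type*} [LinearOrder β] (𝒜 : Set (∀ i, Finset (α i))) (v : ∀ i, α i → β) :
    Prop :=
  ∀ c, gtSet v c ∈ 𝒜 ∧ geSet v c ∈ 𝒜

def feasibleDomain (𝒜 : Set (∀ i, Finset (α i))) : Set (∀ i, α i → ℝ) :=
  {x | 0 ≤ x ∧ ∀ t, gtSet x t ∈ 𝒜}

lemma exists_nonneg_upper_bound [Finite ι] (x y : ∀ i, α i → ℝ) :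
    ∃ M, 0 ≤ M ∧ (∀ i j, x i j ≤ M) ∧ ∀ i j, y i j ≤ M := by
  obtain ⟨M, hM⟩ := (Set.finite_range fun p : Σ i, α i => max (x p.1 p.2) (y p.1 p.2)).bddAbove
  have h (i : ι) (j : α i) : max (x i j) (y i j) ≤ max M 0 :=
    (hM ⟨⟨i, j⟩, rfl⟩).trans (le_max_left _ _)
  exact ⟨max M 0, le_max_right _ _, fun i j => (le_max_left _ _).trans (h i j),
    fun i j => (le_max_right _ _).trans (h i j)⟩

lemma exists_gtSet_eq_geSet [Finite ι] (x : ∀ i, α i → ℝ) (c : ℝ) :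
    ∃ t, gtSet x t = geSet x c := by
  have h : ∀ᶠ t in nhdsWithin c (Set.Iio c), ∀ i j, (t < x i j ↔ c ≤ x i j) := by
    refine Filter.eventually_all.2 fun i => Filter.eventually_all.2 fun j => ?_
    rcases le_or_gt c (x i j) with h | h
    · filter_upwards [self_mem_nhdsWithin] with t ht using iff_of_true (ht.out.trans_le h) h
    · filter_upwards [Ioo_mem_nhdsLT h] with t ht using iff_of_false ht.1.le.not_gt h.not_ge
  obtain ⟨t, ht⟩ := h.exists
  exact ⟨t, by ext i j; simp [ht]⟩

lemma levelSetsIn_of_mem_feasibleDomain [Finite ι] {x : ∀ i, α i → ℝ}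
    (hx : x ∈ feasibleDomain 𝒜) : LevelSetsIn 𝒜 x := fun c =>
  ⟨hx.2 c, (exists_gtSet_eq_geSet x c).elim fun t ht => ht ▸ hx.2 t⟩

variable [∀ i, DecidableEq (α i)]

lemma LevelSetsIn.toLex {β γ : Type*} [LinearOrder β] [LinearOrder γ] (hsup : SupClosed 𝒜)
    (hinf : InfClosed 𝒜) {p : ∀ i, α i → β} {q : ∀ i, α i → γ} (hp : LevelSetsIn 𝒜 p)
    (hq : LevelSetsIn 𝒜 q) : LevelSetsIn 𝒜 (fun i j => toLex (p i j, q i j)) := fun c => by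
  rw [gtSet_toLex, geSet_toLex]
  exact ⟨hsup (hp _).1 (hinf (hp _).2 (hq _).1), hsup (hp _).1 (hinf (hp _).2 (hq _).2)⟩

lemma supClosed_feasibleDomain (hsup : SupClosed 𝒜) : SupClosed (feasibleDomain 𝒜) :=
  fun _ hx _ hy => ⟨le_sup_of_le_left hx.1, fun t => by
    rw [gtSet_sup]; exact hsup (hx.2 t) (hy.2 t)⟩

lemma infClosed_feasibleDomain (hinf : InfClosed 𝒜) : InfClosed (feasibleDomain 𝒜) :=
  fun _ hx _ hy => ⟨le_inf hx.1 hy.1, fun t => by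
    rw [gtSet_inf]; exact hinf (hx.2 t) (hy.2 t)⟩

end Domain

section Indicator

variable [∀ i, DecidableEq (α i)]

def indicatorVec (A : ∀ i, Finset (α i)) : ∀ i, α i → ℝ :=
  fun i j => if j ∈ A i then 1 else 0

lemma indicatorVec_mem_Icc (A : ∀ i, Finset (α i)) (i : ι) (j : α i) :
    indicatorVec A i j ∈ Set.Icc (0 : ℝ) 1 := by
  unfold indicatorVec
  split_ifs <;> simp

lemma indicatorVec_sup (A B : ∀ i, Finset (α i)) :
    indicatorVec (A ⊔ B) = indicatorVec A ⊔ indicatorVec B := by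
  ext i j
  by_cases hA : j ∈ A i <;> by_cases hB : j ∈ B i <;> simp [indicatorVec, hA, hB]

lemma indicatorVec_inf (A B : ∀ i, Finset (α i)) :
    indicatorVec (A ⊓ B) = indicatorVec A ⊓ indicatorVec B := by
  ext i j
  by_cases hA : j ∈ A i <;> by_cases hB : j ∈ B i <;> simp [indicatorVec, hA, hB]

lemma convexComb_indicatorVec {μ : ℝ} (hμ : μ ∈ Set.Icc (0 : ℝ) 1) (A B : ∀ i, Finset (α i)) :
    μ • indicatorVec A + (1 - μ) • indicatorVec B =
      (1 : ℝ) • indicatorVec (A ⊓ B) ⊔ μ • indicatorVec A ⊔ (1 - μ) • indicatorVec B := by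
  obtain ⟨h0, h1⟩ := hμ
  ext i j
  by_cases hA : j ∈ A i <;> by_cases hB : j ∈ B i <;> simp [indicatorVec, hA, hB, h0, h1]

variable [∀ i, Fintype (α i)] {𝒜 : Set (∀ i, Finset (α i))}

lemma gtSet_smul_indicatorVec {c : ℝ} (hc : 0 ≤ c) (A : ∀ i, Finset (α i)) (t : ℝ) :
    gtSet (c • indicatorVec A) t = if t < 0 then ⊤ else if t < c then A else ⊥ := by
  ext i j
  split_ifs with h0 h1 <;> by_cases hA : j ∈ A i <;> simp [indicatorVec, hA] <;> linarith

lemma smul_indicatorVec_mem_feasibleDomain (hbot : ⊥ ∈ 𝒜) (htop : ⊤ ∈ 𝒜)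
    {A : ∀ i, Finset (α i)} (hA : A ∈ 𝒜) {c : ℝ} (hc : 0 ≤ c) :
    c • indicatorVec A ∈ feasibleDomain 𝒜 := by
  refine ⟨fun i j => ?_, fun t => ?_⟩
  · by_cases h : j ∈ A i <;> simp [indicatorVec, h, hc]
  · rw [gtSet_smul_indicatorVec hc]
    split_ifs <;> assumption

lemma indicatorVec_mem_feasibleDomain (hbot : ⊥ ∈ 𝒜) (htop : ⊤ ∈ 𝒜) {A : ∀ i, Finset (α i)}
    (hA : A ∈ 𝒜) : indicatorVec A ∈ feasibleDomain 𝒜 := by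
  simpa using smul_indicatorVec_mem_feasibleDomain hbot htop hA zero_le_one

lemma convexComb_indicatorVec_mem_feasibleDomain (hbot : ⊥ ∈ 𝒜) (htop : ⊤ ∈ 𝒜)
    (hsup : SupClosed 𝒜) (hinf : InfClosed 𝒜) {A B : ∀ i, Finset (α i)} (hA : A ∈ 𝒜)
    (hB : B ∈ 𝒜) {μ : ℝ} (hμ : μ ∈ Set.Icc (0 : ℝ) 1) :
    μ • indicatorVec A + (1 - μ) • indicatorVec B ∈ feasibleDomain 𝒜 := by
  have hsmul {C} (hC : C ∈ 𝒜) {c : ℝ} (hc : 0 ≤ c) :=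
    smul_indicatorVec_mem_feasibleDomain hbot htop hC hc
  rw [convexComb_indicatorVec hμ]
  exact supClosed_feasibleDomain hsup
    (supClosed_feasibleDomain hsup (hsmul (hinf hA hB) zero_le_one) (hsmul hA hμ.1))
    (hsmul hB (sub_nonneg.2 hμ.2))

end Indicator

section Greedy

variable [Fintype ι]

def weight (w : ∀ i, α i → ℝ) (A : ∀ i, Finset (α i)) : ℝ :=
  ∑ i, ∑ j ∈ A i, w i j

@[simp] lemma weight_bot (w : ∀ i, α i → ℝ) : weight w ⊥ = 0 := by
  simp [weight]

variable [∀ i, DecidableEq (α i)]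

lemma weight_sup_of_disjoint (w : ∀ i, α i → ℝ) {A B : ∀ i, Finset (α i)} (h : Disjoint A B) :
    weight w (A ⊔ B) = weight w A + weight w B := by
  simp only [weight, ← sum_add_distrib]
  exact sum_congr rfl fun i _ => sum_union (Pi.disjoint_iff.1 h i)

variable [∀ i, Fintype (α i)] {K : Type*} [LinearOrder K]

/-- Edmonds' greedy vector for the chain of upper sets of the key `κ`; elements with the same key
share the increment of `f` equally. -/
noncomputable def greedyWeight (f : (∀ i, Finset (α i)) → ℝ) (κ : ∀ i, α i → K) (i : ι)
    (j : α i) : ℝ :=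
  (f (geSet κ (κ i j)) - f (gtSet κ (κ i j))) / ∑ i', ((eqSet κ (κ i j) i').card : ℝ)

lemma weight_greedyWeight_eqSet (f : (∀ i, Finset (α i)) → ℝ) (κ : ∀ i, α i → K) (c : K) :
    weight (greedyWeight f κ) (eqSet κ c) = f (geSet κ c) - f (gtSet κ c) := by
  rcases eq_or_ne (eqSet κ c) ⊥ with h | h
  · simp [h, geSet_eq_gtSet_sup_eqSet]
  obtain ⟨i₀, hi₀⟩ := Function.ne_iff.1 h
  have hpos : 0 < ∑ i, ((eqSet κ c i).card : ℝ) :=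
    sum_pos' (fun i _ => Nat.cast_nonneg _)
      ⟨i₀, mem_univ _, Nat.cast_pos.2 (card_pos.2 (nonempty_iff_ne_empty.2 hi₀))⟩
  have hconst : ∀ i, ∀ j ∈ eqSet κ c i, greedyWeight f κ i j =
      (f (geSet κ c) - f (gtSet κ c)) / ∑ i', ((eqSet κ c i').card : ℝ) := by
    intro i j hj
    rw [greedyWeight, mem_eqSet.1 hj]
  simp only [weight, sum_congr rfl fun i _ => sum_congr rfl (hconst i), sum_const, nsmul_eq_mul,
    ← sum_mul]
  field_simp

lemma exists_gtSet_eq_geSet_of_ne_bot {κ : ∀ i, α i → K} {c : K} (h : gtSet κ c ≠ ⊥) :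
    ∃ c', gtSet κ c = geSet κ c' ∧ gtSet κ c' < gtSet κ c := by
  obtain ⟨i₀, hi₀⟩ := Function.ne_iff.1 h
  obtain ⟨j₀, hj₀⟩ := nonempty_iff_ne_empty.2 hi₀
  obtain ⟨⟨i, j⟩, hij, hmin⟩ := (univ.filter fun p : Σ i, α i => c < κ p.1 p.2).exists_min_image
    (fun p => κ p.1 p.2) ⟨⟨i₀, j₀⟩, by simpa using hj₀⟩
  simp only [mem_filter, mem_univ, true_and] at hij hmin
  have hgt : gtSet κ c = geSet κ (κ i j) := by
    ext i' j'
    simpa using ⟨fun h' => hmin ⟨i', j'⟩ h', hij.trans_le⟩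
  refine ⟨κ i j, hgt, lt_of_le_of_ne (fun i' j' => ?_) fun heq => ?_⟩
  · simpa using hij.trans
  · have : j ∈ gtSet κ (κ i j) i := by rw [heq, hgt]; simp
    simp at this

lemma le_of_forall_increment_le {g h : (∀ i, Finset (α i)) → ℝ} (κ : ∀ i, α i → K)
    (hbot : g ⊥ ≤ h ⊥)
    (hinc : ∀ c, g (geSet κ c) - g (gtSet κ c) ≤ h (geSet κ c) - h (gtSet κ c)) (c : K) :
    g (gtSet κ c) ≤ h (gtSet κ c) := by
  suffices ∀ A, ∀ c, gtSet κ c = A → g A ≤ h A from this _ c rfl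
  intro A
  induction A using WellFoundedLT.induction with
  | _ A ih =>
    rintro c rfl
    rcases eq_or_ne (gtSet κ c) ⊥ with hc | hc
    · rwa [hc]
    obtain ⟨c', hgt, hlt⟩ := exists_gtSet_eq_geSet_of_ne_bot hc
    have := ih _ hlt c' rfl
    have := hinc c'
    rw [hgt]
    linarith

lemma le_weight_greedyWeight_gtSet {f : (∀ i, Finset (α i)) → ℝ} (hf0 : f ⊥ = 0)
    (κ : ∀ i, α i → K) (c : K) : f (gtSet κ c) ≤ weight (greedyWeight f κ) (gtSet κ c) :=
  le_of_forall_increment_le κ (by simp [hf0]) (fun c => by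
    rw [geSet_eq_gtSet_sup_eqSet, weight_sup_of_disjoint _ (disjoint_gtSet_eqSet κ c),
      weight_greedyWeight_eqSet, geSet_eq_gtSet_sup_eqSet]
    simp) c

variable {𝒜 : Set (∀ i, Finset (α i))} {f : (∀ i, Finset (α i)) → ℝ} {κ : ∀ i, α i → K}

lemma greedyWeight_increment_le (hsub : IsSubmodularOn 𝒜 f) (hinf : InfClosed 𝒜)
    (hκ : LevelSetsIn 𝒜 κ) {S : ∀ i, Finset (α i)} (hS : S ∈ 𝒜) {c : K}
    (hsat : eqSet κ c ≤ S ∨ Disjoint S (eqSet κ c)) :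
    weight (greedyWeight f κ) (S ⊓ geSet κ c) - weight (greedyWeight f κ) (S ⊓ gtSet κ c) ≤
      f (S ⊓ geSet κ c) - f (S ⊓ gtSet κ c) := by
  have hsplit : S ⊓ geSet κ c = S ⊓ gtSet κ c ⊔ S ⊓ eqSet κ c := by
    rw [geSet_eq_gtSet_sup_eqSet, inf_sup_left]
  have hdisj : Disjoint (S ⊓ gtSet κ c) (S ⊓ eqSet κ c) :=
    (disjoint_gtSet_eqSet κ c).mono inf_le_right inf_le_right
  have hw : weight (greedyWeight f κ) (S ⊓ geSet κ c) -
      weight (greedyWeight f κ) (S ⊓ gtSet κ c) = weight (greedyWeight f κ) (S ⊓ eqSet κ c) := by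
    rw [hsplit, weight_sup_of_disjoint _ hdisj, add_sub_cancel_left]
  rw [hw]
  rcases hsat with hle | hdisj
  · rw [inf_eq_right.2 hle, weight_greedyWeight_eqSet]
    have hsup : S ⊓ geSet κ c ⊔ gtSet κ c = geSet κ c := by
      rw [hsplit, geSet_eq_gtSet_sup_eqSet, inf_eq_right.2 hle, sup_right_comm,
        sup_eq_right.2 (inf_le_right : S ⊓ gtSet κ c ≤ _)]
    have hinf' : S ⊓ geSet κ c ⊓ gtSet κ c = S ⊓ gtSet κ c := by
      rw [inf_assoc, inf_eq_right.2 (gtSet_le_geSet κ c)]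
    have := hsub _ (hinf hS (hκ c).2) _ (hκ c).1
    rw [hsup, hinf'] at this
    linarith
  · rw [hsplit, hdisj.eq_bot, sup_bot_eq]
    simp

lemma weight_greedyWeight_inf_gtSet_le (hsub : IsSubmodularOn 𝒜 f) (hf0 : f ⊥ = 0)
    (hinf : InfClosed 𝒜) (hκ : LevelSetsIn 𝒜 κ) {S : ∀ i, Finset (α i)} (hS : S ∈ 𝒜)
    (hsat : ∀ c, eqSet κ c ≤ S ∨ Disjoint S (eqSet κ c)) (c : K) :
    weight (greedyWeight f κ) (S ⊓ gtSet κ c) ≤ f (S ⊓ gtSet κ c) :=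
  le_of_forall_increment_le (g := fun A => weight (greedyWeight f κ) (S ⊓ A))
    (h := fun A => f (S ⊓ A)) κ (by simp [hf0])
    (fun c => greedyWeight_increment_le hsub hinf hκ hS (hsat c)) c

lemma exists_weight_of_isSubmodularOn (hsup : SupClosed 𝒜) (hinf : InfClosed 𝒜)
    (hsub : IsSubmodularOn 𝒜 f) (hf0 : f ⊥ = 0) {x y z : ∀ i, α i → ℝ}
    (hx : x ∈ feasibleDomain 𝒜) (hy : y ∈ feasibleDomain 𝒜) (hz : z ∈ feasibleDomain 𝒜) :
    ∃ w : ∀ i, α i → ℝ, (∀ t, f (gtSet z t) ≤ weight w (gtSet z t)) ∧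
      (∀ t, weight w (gtSet x t) ≤ f (gtSet x t)) ∧ ∀ t, weight w (gtSet y t) ≤ f (gtSet y t) := by
  obtain ⟨M, -, hxM, hyM⟩ := exists_nonneg_upper_bound x y
  set κ := fun i j => toLex (z i j, toLex (x i j, y i j))
  have hκ : LevelSetsIn 𝒜 κ := (levelSetsIn_of_mem_feasibleDomain hz).toLex hsup hinf
    ((levelSetsIn_of_mem_feasibleDomain hx).toLex hsup hinf
      (levelSetsIn_of_mem_feasibleDomain hy))
  have hchain (t : ℝ) : gtSet κ (toLex (t, toLex (M, M))) = gtSet z t := by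
    ext i j
    simp [κ, Prod.Lex.toLex_lt_toLex, not_lt.2 (hxM i j), not_lt.2 (hyM i j)]
  have htop : gtSet κ (toLex (-1, toLex (0, 0))) = ⊤ := by
    ext i j
    simp only [κ, mem_gtSet, Prod.Lex.toLex_lt_toLex, Pi.top_apply, top_eq_univ, mem_univ,
      iff_true]
    exact .inl (neg_one_lt_zero.trans_le (hz.1 i j))
  refine ⟨greedyWeight f κ, fun t => hchain t ▸ le_weight_greedyWeight_gtSet hf0 κ _,
    fun t => ?_, fun t => ?_⟩
  · simpa [htop] using weight_greedyWeight_inf_gtSet_le hsub hf0 hinf hκ (hx.2 t)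
      (eqSet_le_or_disjoint_gtSet_comp κ (fun c => (ofLex (ofLex c).2).1) t)
      (toLex (-1, toLex (0, 0)))
  · simpa [htop] using weight_greedyWeight_inf_gtSet_le hsub hf0 hinf hκ (hy.2 t)
      (eqSet_le_or_disjoint_gtSet_comp κ (fun c => (ofLex (ofLex c).2).2) t)
      (toLex (-1, toLex (0, 0)))

end Greedy

section Integral

lemma integral_eq_of_forall_Ioo {g : ℝ → ℝ} {a b C : ℝ} (hab : a ≤ b)
    (h : ∀ t ∈ Set.Ioo a b, g t = C) : ∫ t in a..b, g t = (b - a) * C := by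
  rw [intervalIntegral.integral_of_le hab, integral_Ioc_eq_integral_Ioo,
    setIntegral_congr_fun measurableSet_Ioo h, setIntegral_const, Real.volume_real_Ioo_of_le hab,
    smul_eq_mul]

variable [∀ i, Fintype (α i)]

variable [Fintype ι]

lemma measurableSet_setOf_gtSet_eq (x : ∀ i, α i → ℝ) (A : ∀ i, Finset (α i)) :
    MeasurableSet {t : ℝ | gtSet x t = A} := by
  have : {t : ℝ | gtSet x t = A} = {t | ∀ i j, (t < x i j ↔ j ∈ A i)} := by
    ext t
    simp [funext_iff, Finset.ext_iff]
  rw [this]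
  measurability

lemma intervalIntegrable_comp_gtSet (g : (∀ i, Finset (α i)) → ℝ) (x : ∀ i, α i → ℝ)
    (a b : ℝ) : IntervalIntegrable (fun t => g (gtSet x t)) volume a b := by
  classical
  have : (fun t => g (gtSet x t)) = ∑ A, {t | gtSet x t = A}.indicator fun _ => g A := by
    ext t
    simp [Set.indicator_apply]
  rw [this]
  refine IntervalIntegrable.sum _ fun A _ => ?_
  exact ⟨intervalIntegrable_const.1.indicator (measurableSet_setOf_gtSet_eq x A),
    intervalIntegrable_const.2.indicator (measurableSet_setOf_gtSet_eq x A)⟩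

lemma integral_comp_gtSet_mono {g h : (∀ i, Finset (α i)) → ℝ} (x : ∀ i, α i → ℝ) {M : ℝ}
    (hM : 0 ≤ M) (hgh : ∀ t, g (gtSet x t) ≤ h (gtSet x t)) :
    ∫ t in 0..M, g (gtSet x t) ≤ ∫ t in 0..M, h (gtSet x t) :=
  intervalIntegral.integral_mono_on hM (intervalIntegrable_comp_gtSet g x 0 M)
    (intervalIntegrable_comp_gtSet h x 0 M) fun t _ => hgh t

lemma integral_weight_gtSet [∀ i, DecidableEq (α i)] (w : ∀ i, α i → ℝ) {x : ∀ i, α i → ℝ}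
    (hx : ∀ i j, 0 ≤ x i j) {M : ℝ} (hxM : ∀ i j, x i j ≤ M) :
    ∫ t in 0..M, weight w (gtSet x t) = ∑ i, ∑ j, w i j * x i j := by
  have hterm (i : ι) (j : α i) :
      ∫ t in 0..M, (if j ∈ gtSet x t i then w i j else 0) = w i j * x i j := by
    have hint (a b : ℝ) :=
      intervalIntegrable_comp_gtSet (fun A => if j ∈ A i then w i j else 0) x a b
    rw [← intervalIntegral.integral_add_adjacent_intervals (hint 0 (x i j)) (hint (x i j) M),
      integral_eq_of_forall_Ioo (hx i j) (C := w i j) fun t ht => by simp [ht.2],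
      integral_eq_of_forall_Ioo (hxM i j) (C := 0) fun t ht => by simp [not_lt.2 ht.1.le]]
    ring
  have hsum (t : ℝ) :
      weight w (gtSet x t) = ∑ i, ∑ j, (if j ∈ gtSet x t i then w i j else 0) := by
    simp only [weight, sum_ite_mem, univ_inter]
  simp_rw [hsum]
  rw [intervalIntegral.integral_finsetSum fun i _ => ?_]
  · refine sum_congr rfl fun i _ => ?_
    rw [intervalIntegral.integral_finsetSum fun j _ => ?_]
    · exact sum_congr rfl fun j _ => hterm i j
    · exact intervalIntegrable_comp_gtSet (fun A => if j ∈ A i then w i j else 0) x 0 M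
  · exact intervalIntegrable_comp_gtSet (fun A => ∑ j, if j ∈ A i then w i j else 0) x 0 M

end Integral

section Lovasz

variable {k : ℕ} {n : Fin k → ℕ} {f : (∀ i, Finset (Fin (n i))) → ℝ}

theorem kwayLovasz_eq_integral (hf0 : f ⊥ = 0) {x : ∀ i, Fin (n i) → ℝ} (hx : ∀ i j, 0 ≤ x i j)
    {M : ℝ} (hM : 0 ≤ M) (hxM : ∀ i j, x i j ≤ M) :
    kwayLovasz f x = ∫ t in 0..M, f (gtSet x t) := by
  set m := ⨅ i, ⨅ j, x i j
  set S := ⨆ i, ⨆ j, x i j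
  have hm : 0 ≤ m := Real.iInf_nonneg fun i => Real.iInf_nonneg (hx i)
  have hmx (i j) : m ≤ x i j :=
    (ciInf_le (Set.finite_range _).bddBelow i).trans (ciInf_le (Set.finite_range _).bddBelow j)
  have hxS (i j) : x i j ≤ S :=
    (le_ciSup (Set.finite_range _).bddAbove j).trans
      (le_ciSup (f := fun i => ⨆ j, x i j) (Set.finite_range _).bddAbove i)
  have hSM : S ≤ M := Real.iSup_le (fun i => Real.iSup_le (hxM i) hM) hM
  have hbelow : ∫ t in 0..m, f (gtSet x t) = (m - 0) * f ⊤ :=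
    integral_eq_of_forall_Ioo hm fun t ht => congrArg f <| by
      ext i j
      simpa using ht.2.trans_le (hmx i j)
  have habove : ∫ t in S..M, f (gtSet x t) = (M - S) * f ⊥ :=
    integral_eq_of_forall_Ioo hSM fun t ht => congrArg f <| by
      ext i j
      simpa using (hxS i j).trans ht.1.le
  have hint := intervalIntegrable_comp_gtSet f x
  rw [← intervalIntegral.integral_add_adjacent_intervals (hint 0 m) (hint m M),
    ← intervalIntegral.integral_add_adjacent_intervals (hint m S) (hint S M), hbelow, habove, hf0]
  show (∫ t in m..S, f (gtSet x t)) + f ⊤ * m = _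
  ring

lemma kwayLovasz_indicatorVec (hf0 : f ⊥ = 0) (A : ∀ i, Finset (Fin (n i))) :
    kwayLovasz f (indicatorVec A) = f A := by
  have hA := gtSet_smul_indicatorVec zero_le_one A
  simp only [one_smul] at hA
  rw [kwayLovasz_eq_integral hf0 (fun i j => (indicatorVec_mem_Icc A i j).1) zero_le_one
      (fun i j => (indicatorVec_mem_Icc A i j).2),
    integral_eq_of_forall_Ioo zero_le_one (C := f A) fun t ht => by
      rw [hA, if_neg (not_lt.2 ht.1.le), if_pos ht.2],
    sub_zero, one_mul]

lemma kwayLovasz_midpoint_indicatorVec (hf0 : f ⊥ = 0) (A B : ∀ i, Finset (Fin (n i))) :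
    kwayLovasz f ((1 / 2 : ℝ) • indicatorVec A + (1 - 1 / 2 : ℝ) • indicatorVec B) =
      (f (A ⊔ B) + f (A ⊓ B)) / 2 := by
  have hlev {t : ℝ} (ht : 0 ≤ t) :
      gtSet ((1 / 2 : ℝ) • indicatorVec A + (1 - 1 / 2 : ℝ) • indicatorVec B) t =
        (if t < 1 then A ⊓ B else ⊥) ⊔ (if t < 1 / 2 then A else ⊥) ⊔
          (if t < 1 / 2 then B else ⊥) := by
    rw [convexComb_indicatorVec ⟨by norm_num, by norm_num⟩, gtSet_sup, gtSet_sup,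
      gtSet_smul_indicatorVec zero_le_one, gtSet_smul_indicatorVec (by norm_num),
      gtSet_smul_indicatorVec (by norm_num)]
    norm_num [not_lt.2 ht]
  have hbound (i : Fin k) (j : Fin (n i)) :
      0 ≤ ((1 / 2 : ℝ) • indicatorVec A + (1 - 1 / 2 : ℝ) • indicatorVec B) i j ∧
        ((1 / 2 : ℝ) • indicatorVec A + (1 - 1 / 2 : ℝ) • indicatorVec B) i j ≤ 1 := by
    obtain ⟨hA0, hA1⟩ := indicatorVec_mem_Icc A i j
    obtain ⟨hB0, hB1⟩ := indicatorVec_mem_Icc B i j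
    simp only [Pi.add_apply, Pi.smul_apply, smul_eq_mul]
    constructor <;> linarith
  have hint := intervalIntegrable_comp_gtSet f
    ((1 / 2 : ℝ) • indicatorVec A + (1 - 1 / 2 : ℝ) • indicatorVec B)
  rw [kwayLovasz_eq_integral hf0 (fun i j => (hbound i j).1) zero_le_one
      (fun i j => (hbound i j).2),
    ← intervalIntegral.integral_add_adjacent_intervals (hint 0 (1 / 2)) (hint (1 / 2) 1),
    integral_eq_of_forall_Ioo (by norm_num) (C := f (A ⊔ B)) fun t ht => by
      rw [hlev ht.1.le, if_pos (ht.2.trans (by norm_num)), if_pos ht.2, if_pos ht.2,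
        (sup_eq_right.2 inf_le_left : A ⊓ B ⊔ A = A)],
    integral_eq_of_forall_Ioo (by norm_num) (C := f (A ⊓ B)) fun t ht => by
      rw [hlev (by linarith [ht.1]), if_pos ht.2, if_neg (not_lt.2 ht.1.le),
        if_neg (not_lt.2 ht.1.le), sup_bot_eq, sup_bot_eq]]
  ring

variable {𝒜 : Set (∀ i, Finset (Fin (n i)))}

theorem isSubmodularOn_kwayLovasz (hsub : IsSubmodularOn 𝒜 f) (hf0 : f ⊥ = 0) :
    IsSubmodularOn (feasibleDomain 𝒜) (kwayLovasz f) := by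
  intro x hx y hy
  obtain ⟨M, hM, hxM, hyM⟩ := exists_nonneg_upper_bound x y
  have hint := intervalIntegrable_comp_gtSet f
  rw [kwayLovasz_eq_integral hf0 (le_sup_of_le_left hx.1) hM fun i j => max_le (hxM i j) (hyM i j),
    kwayLovasz_eq_integral hf0 (le_inf hx.1 hy.1) hM fun i j => (min_le_left _ _).trans (hxM i j),
    kwayLovasz_eq_integral hf0 hx.1 hM hxM, kwayLovasz_eq_integral hf0 hy.1 hM hyM,
    ← intervalIntegral.integral_add (hint _ 0 M) (hint _ 0 M),
    ← intervalIntegral.integral_add (hint _ 0 M) (hint _ 0 M)]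
  refine intervalIntegral.integral_mono_on hM ((hint _ 0 M).add (hint _ 0 M))
    ((hint _ 0 M).add (hint _ 0 M)) fun t _ => ?_
  rw [gtSet_sup, gtSet_inf]
  exact hsub _ (hx.2 t) _ (hy.2 t)

theorem IsSubmodularOn.of_kwayLovasz (hbot : ⊥ ∈ 𝒜) (htop : ⊤ ∈ 𝒜) (hf0 : f ⊥ = 0)
    (h : IsSubmodularOn (feasibleDomain 𝒜) (kwayLovasz f)) : IsSubmodularOn 𝒜 f := by
  intro A hA B hB
  have := h _ (indicatorVec_mem_feasibleDomain hbot htop hA) _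
    (indicatorVec_mem_feasibleDomain hbot htop hB)
  rwa [← indicatorVec_sup, ← indicatorVec_inf, kwayLovasz_indicatorVec hf0,
    kwayLovasz_indicatorVec hf0, kwayLovasz_indicatorVec hf0, kwayLovasz_indicatorVec hf0] at this

theorem IsSubmodularOn.of_kwayLovasz_midpoint_le (hf0 : f ⊥ = 0)
    (h : ∀ A ∈ 𝒜, ∀ B ∈ 𝒜,
      kwayLovasz f ((1 / 2 : ℝ) • indicatorVec A + (1 - 1 / 2 : ℝ) • indicatorVec B) ≤
        1 / 2 * kwayLovasz f (indicatorVec A) + (1 - 1 / 2) * kwayLovasz f (indicatorVec B)) :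
    IsSubmodularOn 𝒜 f := by
  intro A hA B hB
  have := h A hA B hB
  rw [kwayLovasz_midpoint_indicatorVec hf0, kwayLovasz_indicatorVec hf0,
    kwayLovasz_indicatorVec hf0] at this
  linarith

theorem kwayLovasz_convexComb_le (hsup : SupClosed 𝒜) (hinf : InfClosed 𝒜)
    (hsub : IsSubmodularOn 𝒜 f) (hf0 : f ⊥ = 0) {x y : ∀ i, Fin (n i) → ℝ}
    (hx : x ∈ feasibleDomain 𝒜) (hy : y ∈ feasibleDomain 𝒜) {lam : ℝ}
    (hlam : lam ∈ Set.Icc (0 : ℝ) 1) (hz : lam • x + (1 - lam) • y ∈ feasibleDomain 𝒜) :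
    kwayLovasz f (lam • x + (1 - lam) • y) ≤ lam * kwayLovasz f x + (1 - lam) * kwayLovasz f y := by
  set z := lam • x + (1 - lam) • y
  obtain ⟨M, hM, hxM, hyM⟩ := exists_nonneg_upper_bound x y
  have hzM (i j) : z i j ≤ M := by
    have := hxM i j; have := hyM i j; have := hlam.1; have := hlam.2
    simp only [z, Pi.add_apply, Pi.smul_apply, smul_eq_mul]
    nlinarith
  obtain ⟨w, hwz, hwx, hwy⟩ := exists_weight_of_isSubmodularOn hsup hinf hsub hf0 hx hy hz
  calc kwayLovasz f z = ∫ t in 0..M, f (gtSet z t) := kwayLovasz_eq_integral hf0 hz.1 hM hzM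
    _ ≤ ∫ t in 0..M, weight w (gtSet z t) := integral_comp_gtSet_mono z hM hwz
    _ = lam * ∑ i, ∑ j, w i j * x i j + (1 - lam) * ∑ i, ∑ j, w i j * y i j := by
      rw [integral_weight_gtSet w hz.1 hzM]
      simp only [z, Pi.add_apply, Pi.smul_apply, smul_eq_mul, mul_sum, ← sum_add_distrib]
      exact sum_congr rfl fun i _ => sum_congr rfl fun j _ => by ring
    _ = lam * (∫ t in 0..M, weight w (gtSet x t)) +
          (1 - lam) * ∫ t in 0..M, weight w (gtSet y t) := by
      rw [integral_weight_gtSet w hx.1 hxM, integral_weight_gtSet w hy.1 hyM]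
    _ ≤ lam * (∫ t in 0..M, f (gtSet x t)) + (1 - lam) * ∫ t in 0..M, f (gtSet y t) := by
      have := hlam.1; have := sub_nonneg.2 hlam.2
      gcongr
      · exact integral_comp_gtSet_mono x hM hwx
      · exact integral_comp_gtSet_mono y hM hwy
    _ = lam * kwayLovasz f x + (1 - lam) * kwayLovasz f y := by
      rw [kwayLovasz_eq_integral hf0 hx.1 hM hxM, kwayLovasz_eq_integral hf0 hy.1 hM hyM]

end Lovasz

end KwayLovasz

open KwayLovasz

theorem kway_submodular_iff_convex_iff_submodular_general {k : ℕ}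
    {n : Fin k → ℕ}
    (𝒜 : Set (∀ i, Finset (Fin (n i))))
    (hbot : (fun _ => (∅ : Finset _)) ∈ 𝒜)
    (htop : (fun i => (Finset.univ : Finset (Fin (n i)))) ∈ 𝒜)
    (hcup : ∀ A ∈ 𝒜, ∀ B ∈ 𝒜, (fun i => A i ∪ B i) ∈ 𝒜)
    (hcap : ∀ A ∈ 𝒜, ∀ B ∈ 𝒜, (fun i => A i ∩ B i) ∈ 𝒜)
    (f : (∀ i, Finset (Fin (n i))) → ℝ) (hf0 : f (fun _ => ∅) = 0)
    (D : Set (∀ i, Fin (n i) → ℝ))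
    (hD : D = {x | (∀ i j, 0 ≤ x i j) ∧
      ∀ t : ℝ, (fun i => Finset.univ.filter (fun j => t < x i j)) ∈ 𝒜}) :
    -- (i) `D_𝒜` is closed under the lattice operations
    (∀ x ∈ D, ∀ y ∈ D,
      (fun i j => max (x i j) (y i j)) ∈ D ∧ (fun i j => min (x i j) (y i j)) ∈ D) ∧
    -- (ii) (a) ↔ (b)
    ((∀ A ∈ 𝒜, ∀ B ∈ 𝒜,
        f (fun i => A i ∪ B i) + f (fun i => A i ∩ B i) ≤ f A + f B) ↔
      (∀ x ∈ D, ∀ y ∈ D, ∀ lam ∈ Set.Icc (0:ℝ) 1,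
        (∀ mu ∈ Set.Icc (0:ℝ) 1, (fun i j => mu * x i j + (1 - mu) * y i j) ∈ D) →
        kwayLovasz f (fun i j => lam * x i j + (1 - lam) * y i j) ≤
          lam * kwayLovasz f x + (1 - lam) * kwayLovasz f y)) ∧
    -- (ii) (a) ↔ (c)
    ((∀ A ∈ 𝒜, ∀ B ∈ 𝒜,
        f (fun i => A i ∪ B i) + f (fun i => A i ∩ B i) ≤ f A + f B) ↔
      (∀ x ∈ D, ∀ y ∈ D,
        kwayLovasz f (fun i j => max (x i j) (y i j)) +
            kwayLovasz f (fun i j => min (x i j) (y i j)) ≤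
          kwayLovasz f x + kwayLovasz f y)) := by
  obtain rfl : D = feasibleDomain 𝒜 := hD
  refine ⟨fun x hx y hy => ⟨supClosed_feasibleDomain hcup hx hy,
    infClosed_feasibleDomain hcap hx hy⟩, ⟨?_, ?_⟩, ⟨(isSubmodularOn_kwayLovasz · hf0),
    IsSubmodularOn.of_kwayLovasz hbot htop hf0⟩⟩
  · intro hsub x hx y hy lam hlam hseg
    exact kwayLovasz_convexComb_le hcup hcap hsub hf0 hx hy hlam (hseg lam hlam)
  · intro hconv
    refine IsSubmodularOn.of_kwayLovasz_midpoint_le hf0 fun A hA B hB => ?_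
    exact hconv _ (indicatorVec_mem_feasibleDomain hbot htop hA) _
      (indicatorVec_mem_feasibleDomain hbot htop hB) _ ⟨by norm_num, by norm_num⟩
      fun mu hmu => convexComb_indicatorVec_mem_feasibleDomain hbot htop hcup hcap hA hB hmu

/-- For a lattice family `𝒜` of `k`-tuples of sets (closed under componentwise union
and intersection, containing the bottom and top tuples) and `f : 𝒜 → ℝ` with
`f(∅,…,∅) = 0`: the feasible domain `D_𝒜` is closed under componentwise `max` and
`min`, and `f` is `k`-way submodular iff its `k`-way Lovász extension is convex on
every convex subset of `D_𝒜`, iff the extension is submodular on `D_𝒜`. -/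
theorem kway_submodular_iff_convex_iff_submodular {k : ℕ} (hk : 1 ≤ k)
    {n : Fin k → ℕ} (hn : ∀ i, 1 ≤ n i)
    (𝒜 : Set (∀ i, Finset (Fin (n i))))
    (hbot : (fun _ => (∅ : Finset _)) ∈ 𝒜)
    (htop : (fun i => (Finset.univ : Finset (Fin (n i)))) ∈ 𝒜)
    (hcup : ∀ A ∈ 𝒜, ∀ B ∈ 𝒜, (fun i => A i ∪ B i) ∈ 𝒜)
    (hcap : ∀ A ∈ 𝒜, ∀ B ∈ 𝒜, (fun i => A i ∩ B i) ∈ 𝒜)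
    (f : (∀ i, Finset (Fin (n i))) → ℝ) (hf0 : f (fun _ => ∅) = 0)
    (D : Set (∀ i, Fin (n i) → ℝ))
    (hD : D = {x | (∀ i j, 0 ≤ x i j) ∧
      ∀ t : ℝ, (fun i => Finset.univ.filter (fun j => t < x i j)) ∈ 𝒜}) :
    -- (i) `D_𝒜` is closed under the lattice operations
    (∀ x ∈ D, ∀ y ∈ D,
      (fun i j => max (x i j) (y i j)) ∈ D ∧ (fun i j => min (x i j) (y i j)) ∈ D) ∧
    -- (ii) (a) ↔ (b)
    ((∀ A ∈ 𝒜, ∀ B ∈ 𝒜,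
        f (fun i => A i ∪ B i) + f (fun i => A i ∩ B i) ≤ f A + f B) ↔
      (∀ x ∈ D, ∀ y ∈ D, ∀ lam ∈ Set.Icc (0:ℝ) 1,
        (∀ mu ∈ Set.Icc (0:ℝ) 1, (fun i j => mu * x i j + (1 - mu) * y i j) ∈ D) →
        kwayLovasz f (fun i j => lam * x i j + (1 - lam) * y i j) ≤
          lam * kwayLovasz f x + (1 - lam) * kwayLovasz f y)) ∧
    -- (ii) (a) ↔ (c)
    ((∀ A ∈ 𝒜, ∀ B ∈ 𝒜,
        f (fun i => A i ∪ B i) + f (fun i => A i ∩ B i) ≤ f A + f B) ↔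
      (∀ x ∈ D, ∀ y ∈ D,
        kwayLovasz f (fun i j => max (x i j) (y i j)) +
            kwayLovasz f (fun i j => min (x i j) (y i j)) ≤
          kwayLovasz f x + kwayLovasz f y)) :=
  kway_submodular_iff_convex_iff_submodular_general 𝒜 hbot htop hcup hcap f hf0 D hD
end

section
/- Let S be a nonempty compact metric space and F, G : S → ℝ continuous with G(x) > 0 for all x ∈ S. Let x^0 ∈ S, r^0 = F(x^0)/G(x^0), and suppose the sequences (x^k) in S and (r^k) in ℝ satisfy the Dinkelbach-type scheme: x^{k+1} is a minimizer of x ↦ F(x) − r^k G(x) over S, and r^{k+1} = F(x^{k+1})/G(x^{k+1}). Then the sequence (r^k) is monotonically non-increasing and converges to min_{x ∈ S} F(x)/G(x). Dually, if x^{k+1} is chosen as a maximizer of F(x) − r^k G(x) over S, then (r^k) is monotonically non-decreasing and converges to max_{x ∈ S} F(x)/G(x). -/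
/-!
Write `q(y) = F y / G y` and `r_k = q(x^k)`. Testing the minimality of `x^{k+1}` at `x^k`, where
`F - r_k G` vanishes, gives `r_{k+1} ≤ r_k`, and `r_k` is bounded below by `min q`, so it converges
to some `L`. Testing it at an arbitrary `y` gives
`(r_k - q(y)) G(y) ≤ (r_k - r_{k+1}) G(x^{k+1}) ≤ (r_k - r_{k+1}) max G → 0`,
hence `L ≤ q(y)`. The maximization scheme is the minimization scheme for `-F`.
-/

open Filter

theorem Real.iInf_neg {ι : Sort*} (f : ι → ℝ) : ⨅ i, -f i = -⨆ i, f i := by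
  rw [iInf, iSup, ← Real.sInf_neg, ← Set.neg_range]

theorem le_of_tendsto_of_sub_mul_le_sub_mul {r : ℕ → ℝ} {L a b M : ℝ}
    (hr : Tendsto r atTop (nhds L)) (ha : 0 < a)
    (h : ∀ k, (r k - b) * a ≤ (r k - r (k + 1)) * M) : L ≤ b := by
  have hlim : (L - b) * a ≤ (L - L) * M :=
    le_of_tendsto_of_tendsto' ((hr.sub_const b).mul_const a)
      ((hr.sub (hr.comp (tendsto_add_atTop_nat 1))).mul_const M) h
  nlinarith

namespace Dinkelbach

variable {S : Type*} {F G : S → ℝ}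

theorem div_le_div_of_isMinOn (hGpos : ∀ y, 0 < G y) {p q : S}
    (hq : IsMinOn (fun y => F y - F p / G p * G y) Set.univ q) :
    F q / G q ≤ F p / G p := by
  have hp : F p - F p / G p * G p = 0 := by rw [div_mul_cancel₀ _ (hGpos p).ne', sub_self]
  have := isMinOn_univ_iff.1 hq p
  rw [hp] at this
  rw [div_le_iff₀ (hGpos q)]
  linarith

theorem sub_div_mul_le_of_isMinOn (hGpos : ∀ y, 0 < G y) {c : ℝ} {q : S}
    (hq : IsMinOn (fun y => F y - c * G y) Set.univ q) (y : S) :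
    (c - F y / G y) * G y ≤ (c - F q / G q) * G q := by
  have := isMinOn_univ_iff.1 hq y
  rw [sub_mul, sub_mul, div_mul_cancel₀ _ (hGpos y).ne', div_mul_cancel₀ _ (hGpos q).ne']
  linarith

variable [TopologicalSpace S] [CompactSpace S]

theorem antitone_tendsto_iInf (hF : Continuous F) (hG : Continuous G) (hGpos : ∀ y, 0 < G y)
    (x : ℕ → S)
    (hmin : ∀ k, IsMinOn (fun y => F y - F (x k) / G (x k) * G y) Set.univ (x (k + 1))) :
    Antitone (fun k => F (x k) / G (x k)) ∧
      Tendsto (fun k => F (x k) / G (x k)) atTop (nhds (⨅ y, F y / G y)) := by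
  have : Nonempty S := ⟨x 0⟩
  set r := fun k => F (x k) / G (x k)
  have hdesc : ∀ k, r (k + 1) ≤ r k := fun k => div_le_div_of_isMinOn hGpos (hmin k)
  have hanti : Antitone r := antitone_nat_of_succ_le hdesc
  obtain ⟨m, hm⟩ := (isCompact_range (hF.div hG fun y => (hGpos y).ne')).bddBelow
  obtain ⟨M, hM⟩ := (isCompact_range hG).bddAbove
  have htend : Tendsto r atTop (nhds (⨅ k, r k)) :=
    tendsto_atTop_ciInf hanti ⟨m, by rintro _ ⟨k, rfl⟩; exact hm ⟨x k, rfl⟩⟩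
  have hle : ∀ y, ⨅ k, r k ≤ F y / G y := fun y =>
    le_of_tendsto_of_sub_mul_le_sub_mul htend (hGpos y) fun k =>
      (sub_div_mul_le_of_isMinOn hGpos (hmin k) y).trans
        (mul_le_mul_of_nonneg_left (hM ⟨x (k + 1), rfl⟩) (sub_nonneg.2 (hdesc k)))
  have hbdd : BddBelow (Set.range fun y => F y / G y) := ⟨_, by rintro _ ⟨y, rfl⟩; exact hle y⟩
  have hlim : ⨅ k, r k = ⨅ y, F y / G y :=
    le_antisymm (le_ciInf hle) (le_ciInf fun k => ciInf_le hbdd (x k))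
  exact ⟨hanti, hlim ▸ htend⟩

theorem monotone_tendsto_iSup (hF : Continuous F) (hG : Continuous G) (hGpos : ∀ y, 0 < G y)
    (x : ℕ → S)
    (hmax : ∀ k, IsMaxOn (fun y => F y - F (x k) / G (x k) * G y) Set.univ (x (k + 1))) :
    Monotone (fun k => F (x k) / G (x k)) ∧
      Tendsto (fun k => F (x k) / G (x k)) atTop (nhds (⨆ y, F y / G y)) := by
  have hmin : ∀ k, IsMinOn (fun y => -F y - -F (x k) / G (x k) * G y) Set.univ (x (k + 1)) :=
    fun k => isMinOn_univ_iff.2 fun y => by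
      have := isMaxOn_univ_iff.1 (hmax k) y
      simp only [neg_div]
      linarith
  obtain ⟨hanti, htend⟩ := antitone_tendsto_iInf (F := fun y => -F y) hF.neg hG hGpos x hmin
  simp only [neg_div] at hanti htend
  rw [Real.iInf_neg] at htend
  exact ⟨fun a b hab => neg_le_neg_iff.1 (hanti hab), by simpa using htend.neg⟩

end Dinkelbach

theorem dinkelbach_global_convergence_general {S : Type*} [MetricSpace S] [CompactSpace S]
    (F G : S → ℝ) (hF : Continuous F) (hG : Continuous G)
    (hGpos : ∀ y : S, 0 < G y) (x : ℕ → S) (r : ℕ → ℝ)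
    (hr0 : r 0 = F (x 0) / G (x 0)) :
    ((∀ k : ℕ, IsMinOn (fun y : S => F y - r k * G y) Set.univ (x (k + 1))) →
      (∀ k : ℕ, r (k + 1) = F (x (k + 1)) / G (x (k + 1))) →
      Antitone r ∧ Tendsto r atTop (nhds (⨅ y : S, F y / G y))) ∧
    ((∀ k : ℕ, IsMaxOn (fun y : S => F y - r k * G y) Set.univ (x (k + 1))) →
      (∀ k : ℕ, r (k + 1) = F (x (k + 1)) / G (x (k + 1))) →
      Monotone r ∧ Tendsto r atTop (nhds (⨆ y : S, F y / G y))) := by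
  have hr : (∀ k, r (k + 1) = F (x (k + 1)) / G (x (k + 1))) →
      r = fun k => F (x k) / G (x k) := fun hrk =>
    funext fun k => by cases k with
      | zero => exact hr0
      | succ k => exact hrk k
  refine ⟨fun hmin hrk => ?_, fun hmax hrk => ?_⟩
  · obtain rfl := hr hrk
    exact Dinkelbach.antitone_tendsto_iInf hF hG hGpos x hmin
  · obtain rfl := hr hrk
    exact Dinkelbach.monotone_tendsto_iSup hF hG hGpos x hmax

/-- Global convergence of the Dinkelbach-type iterative scheme: on a nonempty compact
metric space `S`, with `F, G : S → ℝ` continuous and `G > 0`, if `x^{k+1}` minimizes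
(resp. maximizes) `F(·) − r^k G(·)` over `S` and `r^{k+1} = F(x^{k+1})/G(x^{k+1})`,
then `(r^k)` is monotone and converges to the global minimum (resp. maximum) of
`F/G` over `S`. -/
theorem dinkelbach_global_convergence {S : Type*} [MetricSpace S] [CompactSpace S]
    [Nonempty S] (F G : S → ℝ) (hF : Continuous F) (hG : Continuous G)
    (hGpos : ∀ y : S, 0 < G y) (x : ℕ → S) (r : ℕ → ℝ)
    (hr0 : r 0 = F (x 0) / G (x 0)) :
    ((∀ k : ℕ, IsMinOn (fun y : S => F y - r k * G y) Set.univ (x (k + 1))) →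
      (∀ k : ℕ, r (k + 1) = F (x (k + 1)) / G (x (k + 1))) →
      Antitone r ∧ Tendsto r atTop (nhds (⨅ y : S, F y / G y))) ∧
    ((∀ k : ℕ, IsMaxOn (fun y : S => F y - r k * G y) Set.univ (x (k + 1))) →
      (∀ k : ℕ, r (k + 1) = F (x (k + 1)) / G (x (k + 1))) →
      Monotone r ∧ Tendsto r atTop (nhds (⨆ y : S, F y / G y))) :=
  dinkelbach_global_convergence_general F G hF hG hGpos x r hr0
end

section
/- Let V be a finite set. For every function f : P(V) → ℝ there exist submodular functions f_1, f_2 : P(V) → ℝ such that f = f_1 − f_2, where a function h : P(V) → ℝ is submodular if h(A) + h(B) ≥ h(A ∪ B) + h(A ∩ B) for all A, B ⊆ V. -/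
/-!
Adding a large multiple of the strictly submodular function `A ↦ -#A²` to `f` makes it
submodular: for comparable `A, B` the submodular inequality is an equality for every function,
and for incomparable `A, B` the function `-#A²` has a gap of at least `2`, which absorbs the
bounded defect of `f`.
-/

open Finset

/-- `h : 𝒫(V) → ℝ` is submodular. -/
def Submodular {V : Type*} [DecidableEq V] (h : Finset V → ℝ) : Prop :=
  ∀ A B : Finset V, h (A ∪ B) + h (A ∩ B) ≤ h A + h B

section

variable {V : Type*} [DecidableEq V]

theorem Submodular.of_incomparable {h : Finset V → ℝ}
    (hh : ∀ A B : Finset V, ¬A ⊆ B → ¬B ⊆ A → h (A ∪ B) + h (A ∩ B) ≤ h A + h B) :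
    Submodular h := by
  intro A B
  by_cases hAB : A ⊆ B
  · rw [union_eq_right.2 hAB, inter_eq_left.2 hAB, add_comm]
  by_cases hBA : B ⊆ A
  · rw [union_eq_left.2 hBA, inter_eq_right.2 hBA]
  exact hh A B hAB hBA

theorem Submodular.const_smul {h : Finset V → ℝ} (hh : Submodular h) {c : ℝ} (hc : 0 ≤ c) :
    Submodular (c • h) := fun A B => by
  simp only [Pi.smul_apply, smul_eq_mul, ← mul_add]
  exact mul_le_mul_of_nonneg_left (hh A B) hc

def negCardSq (A : Finset V) : ℝ := -(#A : ℝ) ^ 2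

theorem negCardSq_union_add_inter_add_two_le {A B : Finset V} (hAB : ¬A ⊆ B) (hBA : ¬B ⊆ A) :
    negCardSq (A ∪ B) + negCardSq (A ∩ B) + 2 ≤ negCardSq A + negCardSq B := by
  have hunion : (#(A ∪ B) : ℝ) = #A + #B - #(A ∩ B) := by
    rw [eq_sub_iff_add_eq]; exact_mod_cast card_union_add_card_inter A B
  have hA : (#(A ∩ B) : ℝ) + 1 ≤ #A := by
    exact_mod_cast card_lt_card (Finset.ssubset_iff_subset_ne.2 ⟨inter_subset_left, fun h => hAB (inter_eq_left.1 h)⟩)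
  have hB : (#(A ∩ B) : ℝ) + 1 ≤ #B := by
    exact_mod_cast card_lt_card (Finset.ssubset_iff_subset_ne.2 ⟨inter_subset_right, fun h => hBA (inter_eq_right.1 h)⟩)
  -- with `i = #(A ∩ B)`, the gap is `(a + b - i)² + i² - a² - b² = 2 (a - i) (b - i)`
  simp only [negCardSq, hunion]
  nlinarith [mul_nonneg (sub_nonneg.2 hA) (sub_nonneg.2 hB)]

theorem submodular_negCardSq : Submodular (negCardSq : Finset V → ℝ) :=
  .of_incomparable fun _ _ hAB hBA => by
    linarith [negCardSq_union_add_inter_add_two_le hAB hBA]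

theorem submodular_add_smul_negCardSq {f : Finset V → ℝ} {C : ℝ} (hf : ∀ X, |f X| ≤ C) :
    Submodular (f + (2 * C) • negCardSq) := by
  have hC : 0 ≤ C := (abs_nonneg _).trans (hf ∅)
  refine .of_incomparable fun A B hAB hBA => ?_
  have hgap := mul_le_mul_of_nonneg_left (negCardSq_union_add_inter_add_two_le hAB hBA)
    (by positivity : 0 ≤ 2 * C)
  simp only [Pi.add_apply, Pi.smul_apply, smul_eq_mul]
  linarith [le_abs_self (f (A ∪ B)), le_abs_self (f (A ∩ B)), neg_abs_le (f A),
    neg_abs_le (f B), hf (A ∪ B), hf (A ∩ B), hf A, hf B]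

end

/-- Every set function on a finite set is the difference of two submodular
functions. -/
theorem exists_submodular_decomposition {V : Type*} [Fintype V] [DecidableEq V]
    (f : Finset V → ℝ) :
    ∃ f₁ f₂ : Finset V → ℝ, Submodular f₁ ∧ Submodular f₂ ∧
      ∀ A : Finset V, f A = f₁ A - f₂ A := by
  set C := ∑ X : Finset V, |f X|
  have hf : ∀ X, |f X| ≤ C := fun X =>
    single_le_sum (fun Y _ => abs_nonneg (f Y)) (mem_univ X)
  have hC : 0 ≤ 2 * C := by positivity
  exact ⟨f + (2 * C) • negCardSq, (2 * C) • negCardSq, submodular_add_smul_negCardSq hf,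
    submodular_negCardSq.const_smul hC, fun A => by simp⟩
end

section
/- Let G = (V,E) be a finite unweighted undirected simple graph with V = {1,…,n}, n ≥ 1, and vertex degrees deg_i. Then the independence number satisfies α(G) = max over x ∈ ℝ^n ∖ {0} of [Σ_{{i,j}∈E}(|x_i − x_j| + |x_i + x_j|) − 2·Σ_{i∈V}(deg_i − 1)|x_i|] / (2‖x‖_∞), and equivalently α(G) = max over x ∈ ℝ^n ∖ {0} of (‖x‖_1 − Σ_{{i,j}∈E} min{|x_i|, |x_j|}) / ‖x‖_∞, where ‖x‖_1 = Σ_i |x_i| and ‖x‖_∞ = max_i |x_i|. -/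
/-!
Since `|a - b| + |a + b| = 2 max(|a|, |b|) = 2 (|a| + |b|) - 2 min(|a|, |b|)` and
`Σ_{ij ∈ E} (|x_i| + |x_j|) = Σ_i deg_i |x_i|`, the first quotient equals the second, so both
representations reduce to `f(y) = Σ_i y_i - Σ_{ij ∈ E} min(y_i, y_j)` at `y = |x|`.
The indicator vector of a maximum independent set gives `f = α` with `‖y‖_∞ = 1`.
Conversely `f(y) ≤ α ‖y‖_∞` for `y ≥ 0`, by induction on the vertex set: remove a vertex `v`
where `y` is minimal. If `v` has a neighbour, the edges at `v` contribute at least `y_v`, so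
removing `v` does not decrease `f`; if `v` is isolated, `f` drops by `y_v ≤ ‖y‖_∞` and `v` can be
added to an independent set of the remaining vertices.
-/

open Finset

/-- The independence number of a finite simple graph: the largest cardinality of a
set of pairwise non-adjacent vertices. -/
def indepNum {n : ℕ} (G : SimpleGraph (Fin n)) [DecidableRel G.Adj] : ℕ :=
  Finset.sup
    (Finset.univ.filter (fun S : Finset (Fin n) => ∀ i ∈ S, ∀ j ∈ S, ¬ G.Adj i j))
    Finset.card

/-- The sum of a symmetric expression `F i j` over the edges `{i,j} ∈ E` of `G`,
each edge counted once (via its representation with `i < j`). -/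
def sumOverEdges {n : ℕ} (G : SimpleGraph (Fin n)) [DecidableRel G.Adj]
    (F : Fin n → Fin n → ℝ) : ℝ :=
  ∑ p ∈ Finset.univ.filter
      (fun p : Fin n × Fin n => p.1 < p.2 ∧ G.Adj p.1 p.2), F p.1 p.2

theorem abs_sub_add_abs_add {α : Type*} [CommRing α] [LinearOrder α] [IsStrictOrderedRing α]
    (a b : α) : |a - b| + |a + b| = 2 * max |a| |b| := by
  rcases abs_cases a with ⟨ha, _⟩ | ⟨ha, _⟩ <;> rcases abs_cases b with ⟨hb, _⟩ | ⟨hb, _⟩ <;>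
    rcases abs_cases (a - b) with ⟨h1, _⟩ | ⟨h1, _⟩ <;>
    rcases abs_cases (a + b) with ⟨h2, _⟩ | ⟨h2, _⟩ <;>
    rcases max_cases |a| |b| with ⟨h3, _⟩ | ⟨h3, _⟩ <;> linarith

section

variable {V : Type*} [DecidableEq V] (G : SimpleGraph V) [DecidableRel G.Adj]

theorem exists_isIndepSet_two_mul_sum_sub_le {y : V → ℝ} {M : ℝ} (hy : ∀ i, 0 ≤ y i)
    (hyM : ∀ i, y i ≤ M) (S : Finset V) :
    ∃ I ⊆ S, G.IsIndepSet I ∧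
      2 * ∑ i ∈ S, y i - ∑ i ∈ S, ∑ j ∈ S, (if G.Adj i j then min (y i) (y j) else 0) ≤
        2 * #I * M := by
  induction S using Finset.induction_on_min_value y with
  | empty => exact ⟨∅, subset_refl _, by simp, by simp⟩
  | insert a S ha hmin ih =>
    obtain ⟨I, hIS, hI, hle⟩ := ih
    have hsplit : 2 * ∑ i ∈ insert a S, y i -
        ∑ i ∈ insert a S, ∑ j ∈ insert a S, (if G.Adj i j then min (y i) (y j) else 0) =
        (2 * ∑ i ∈ S, y i - ∑ i ∈ S, ∑ j ∈ S, (if G.Adj i j then min (y i) (y j) else 0)) +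
          2 * (y a - ∑ j ∈ S, if G.Adj a j then y a else 0) := by
      have hrow : ∀ j ∈ S, (if G.Adj a j then min (y a) (y j) else 0) =
          if G.Adj a j then y a else 0 := fun j hj => by rw [min_eq_left (hmin j hj)]
      have hcol : ∀ i ∈ S, (if G.Adj i a then min (y i) (y a) else 0) =
          if G.Adj a i then y a else 0 := fun i hi => by
        simp only [G.adj_comm i a, min_eq_right (hmin i hi)]
      simp only [sum_insert ha, G.irrefl, if_false, sum_add_distrib, sum_congr rfl hrow,
        sum_congr rfl hcol]
      ring
    by_cases hN : ∃ j ∈ S, G.Adj a j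
    · refine ⟨I, hIS.trans (subset_insert _ _), hI, ?_⟩
      obtain ⟨j, hj, haj⟩ := hN
      have : y a ≤ ∑ j ∈ S, if G.Adj a j then y a else 0 := by
        refine le_trans (by simp [haj]) (single_le_sum (fun k _ => ?_) hj)
        split_ifs <;> simp [hy a]
      linarith
    · push Not at hN
      refine ⟨insert a I, insert_subset_insert _ hIS, ?_, ?_⟩
      · rw [coe_insert]
        exact hI.insert fun b hb _ => ⟨hN b (hIS hb), fun hba => hN b (hIS hb) hba.symm⟩
      · rw [card_insert_of_notMem (fun h => ha (hIS h))]
        rw [sum_eq_zero fun j hj => if_neg (hN j hj)] at hsplit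
        push_cast
        linarith [hyM a]

end

section

variable {n : ℕ} (G : SimpleGraph (Fin n)) [DecidableRel G.Adj]

theorem indepNum_eq_simpleGraph_indepNum : indepNum G = G.indepNum := by
  apply le_antisymm
  · refine Finset.sup_le fun S hS => SimpleGraph.IsIndepSet.card_le_indepNum ?_
    exact fun i hi j hj _ => (mem_filter.1 hS).2 i hi j hj
  · obtain ⟨S, hS⟩ := G.exists_isNIndepSet_indepNum
    rw [← hS.card_eq]
    refine le_sup (mem_filter.2 ⟨mem_univ _, fun i hi j hj => ?_⟩)
    rcases eq_or_ne i j with rfl | hij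
    · exact G.irrefl
    · exact hS.isIndepSet hi hj hij

theorem sumOverEdges_eq_sum_sum (F : Fin n → Fin n → ℝ) :
    sumOverEdges G F = ∑ i, ∑ j, if i < j ∧ G.Adj i j then F i j else 0 := by
  rw [sumOverEdges, sum_filter, Fintype.sum_prod_type]

theorem two_mul_sumOverEdges {F : Fin n → Fin n → ℝ} (hF : ∀ i j, F i j = F j i) :
    2 * sumOverEdges G F = ∑ i, ∑ j, if G.Adj i j then F i j else 0 := by
  have hsplit : ∀ i j, (if G.Adj i j then F i j else 0) =
      (if i < j ∧ G.Adj i j then F i j else 0) + (if j < i ∧ G.Adj j i then F j i else 0) := by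
    intro i j
    by_cases h : G.Adj i j
    · rcases lt_or_gt_of_ne h.ne with hij | hij
      · simp [h, hij, hij.not_gt]
      · simp [h, h.symm, hij, hij.not_gt, hF i j]
    · simp [h, G.adj_comm j i]
  simp only [hsplit, sum_add_distrib]
  rw [sum_comm (f := fun i j => if j < i ∧ G.Adj j i then F j i else 0),
    ← sumOverEdges_eq_sum_sum]
  ring

theorem sumOverEdges_add_eq_sum_degree_mul (f : Fin n → ℝ) :
    sumOverEdges G (fun i j => f i + f j) = ∑ i, (G.degree i : ℝ) * f i := by
  have hrow : ∀ i, ∑ j, (if G.Adj i j then f i else 0) = G.degree i * f i := fun i => by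
    rw [← sum_filter, sum_const, ← G.neighborFinset_eq_filter, G.card_neighborFinset_eq_degree,
      nsmul_eq_mul]
  have hcol : ∑ i, ∑ j, (if G.Adj i j then f j else 0) = ∑ i, G.degree i * f i := by
    rw [sum_comm]
    simp only [G.adj_comm _ _, hrow]
  have h := two_mul_sumOverEdges G (F := fun i j => f i + f j) fun _ _ => add_comm _ _
  simp only [ite_add_zero, sum_add_distrib, hrow, hcol] at h
  linarith

theorem sumOverEdges_abs_sub_add_abs_add (x : Fin n → ℝ) :
    sumOverEdges G (fun i j => |x i - x j| + |x i + x j|) -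
        2 * ∑ i, ((G.degree i : ℝ) - 1) * |x i| =
      2 * ((∑ i, |x i|) - sumOverEdges G (fun i j => min |x i| |x j|)) := by
  have h : sumOverEdges G (fun i j => |x i - x j| + |x i + x j|) =
      2 * sumOverEdges G (fun i j => |x i| + |x j|) -
        2 * sumOverEdges G (fun i j => min |x i| |x j|) := by
    simp only [sumOverEdges, mul_sum, ← sum_sub_distrib]
    refine sum_congr rfl fun p _ => ?_
    rw [abs_sub_add_abs_add, ← min_add_max |x p.1| |x p.2|]
    ring
  rw [h, sumOverEdges_add_eq_sum_degree_mul]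
  simp only [sub_mul, one_mul, sum_sub_distrib]
  ring

theorem sum_sub_sumOverEdges_min_le {y : Fin n → ℝ} {M : ℝ} (hy : ∀ i, 0 ≤ y i)
    (hyM : ∀ i, y i ≤ M) (hM : 0 ≤ M) :
    ∑ i, y i - sumOverEdges G (fun i j => min (y i) (y j)) ≤ G.indepNum * M := by
  obtain ⟨I, -, hI, hle⟩ := exists_isIndepSet_two_mul_sum_sub_le G hy hyM univ
  rw [← two_mul_sumOverEdges G fun _ _ => min_comm _ _] at hle
  have hIα : (#I : ℝ) ≤ G.indepNum := by exact_mod_cast hI.card_le_indepNum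
  nlinarith

theorem div_iSup_abs_le_indepNum {x : Fin n → ℝ} (hx : x ≠ 0) :
    (∑ i, |x i| - sumOverEdges G (fun i j => min |x i| |x j|)) / (⨆ i, |x i|) ≤
      G.indepNum := by
  obtain ⟨k, hk⟩ := Function.ne_iff.1 hx
  have hle : ∀ i, |x i| ≤ ⨆ i, |x i| := le_ciSup (Finite.bddAbove_range _)
  have hpos : 0 < ⨆ i, |x i| := (abs_pos.2 hk).trans_le (hle k)
  rw [div_le_iff₀ hpos]
  exact sum_sub_sumOverEdges_min_le G (fun i => abs_nonneg _) hle hpos.le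

theorem exists_div_iSup_abs_eq_indepNum (hn : 1 ≤ n) :
    ∃ x : Fin n → ℝ, x ≠ 0 ∧
      (∑ i, |x i| - sumOverEdges G (fun i j => min |x i| |x j|)) / (⨆ i, |x i|) =
        G.indepNum := by
  obtain ⟨I, hI⟩ := G.exists_isNIndepSet_indepNum
  have hIne : I.Nonempty := by
    rw [← card_pos, hI.card_eq]
    exact SimpleGraph.IsIndepSet.card_le_indepNum (t := {⟨0, hn⟩}) (by simp)
  obtain ⟨k, hk⟩ := hIne
  set x : Fin n → ℝ := fun i => if i ∈ I then 1 else 0 with hx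
  have habs : ∀ i, |x i| = x i := fun i => abs_of_nonneg (by simp only [hx]; split_ifs <;> simp)
  have hsum : ∑ i, |x i| = #I := by
    simp only [habs]
    simp [hx]
  have hedge : sumOverEdges G (fun i j => min |x i| |x j|) = 0 := by
    refine sum_eq_zero fun p hp => ?_
    have hadj := (mem_filter.1 hp).2.2
    by_cases h1 : p.1 ∈ I <;> by_cases h2 : p.2 ∈ I
    · exact absurd hadj (hI.isIndepSet h1 h2 hadj.ne)
    all_goals simp [hx, h1, h2]
  have hsup : ⨆ i, |x i| = 1 := by
    have : Nonempty (Fin n) := ⟨k⟩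
    refine le_antisymm (ciSup_le fun i => ?_) ?_
    · rw [habs, hx]
      dsimp only
      split_ifs <;> simp
    · exact le_ciSup_of_le (Finite.bddAbove_range _) k (by simp [hx, hk])
  exact ⟨x, Function.ne_iff.2 ⟨k, by simp [hx, hk]⟩, by rw [hsum, hedge, hsup, hI.card_eq]; simp⟩

theorem isGreatest_div_iSup_abs (hn : 1 ≤ n) :
    IsGreatest {r : ℝ | ∃ x : Fin n → ℝ, x ≠ 0 ∧
      r = ((∑ i, |x i|) - sumOverEdges G (fun i j => min |x i| |x j|)) / (⨆ i, |x i|)}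
      G.indepNum := by
  refine ⟨?_, ?_⟩
  · obtain ⟨x, hx, h⟩ := exists_div_iSup_abs_eq_indepNum G hn
    exact ⟨x, hx, h.symm⟩
  · rintro r ⟨x, hx, rfl⟩
    exact div_iSup_abs_le_indepNum G hx

end

/-- Two equivalent continuous representations of the independence number:
`α(G) = max_{x ≠ 0} [Σ_{{i,j}∈E}(|x_i−x_j|+|x_i+x_j|) − 2Σ_i(deg_i−1)|x_i|]/(2‖x‖_∞)`
and `α(G) = max_{x ≠ 0} (‖x‖₁ − Σ_{{i,j}∈E} min{|x_i|,|x_j|})/‖x‖_∞`. -/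
theorem indepNum_continuous_representations {n : ℕ} (hn : 1 ≤ n)
    (G : SimpleGraph (Fin n)) [DecidableRel G.Adj] :
    ((indepNum G : ℝ) =
      sSup {r : ℝ | ∃ x : Fin n → ℝ, x ≠ 0 ∧
        r = (sumOverEdges G (fun i j => |x i - x j| + |x i + x j|) -
              2 * ∑ i, ((G.degree i : ℝ) - 1) * |x i|) / (2 * ⨆ i, |x i|)}) ∧
    ((indepNum G : ℝ) =
      sSup {r : ℝ | ∃ x : Fin n → ℝ, x ≠ 0 ∧
        r = ((∑ i, |x i|) - sumOverEdges G (fun i j => min |x i| |x j|)) /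
              (⨆ i, |x i|)}) := by
  simp_rw [sumOverEdges_abs_sub_add_abs_add, mul_div_mul_left _ _ (two_ne_zero' ℝ),
    (isGreatest_div_iSup_abs G hn).csSup_eq, indepNum_eq_simpleGraph_indepNum, and_self]
end

section
/- Let G = (V,E) be a finite simple graph with E ≠ ∅ and let c : V → [0,∞). Then max over edges {i,j} ∈ E of (c_i + c_j) equals max over x ∈ ℝ^E ∖ {0} of (Σ_{i∈V} c_i · |Σ_{e∈E, i∈e} x_e|) / (Σ_{e∈E} |x_e|). In particular, if G has no isolated vertices, taking c_i = 1/deg_i yields that the Cheeger-like constant max_{{v,w}∈E}(1/deg v + 1/deg w) equals max_{x∈ℝ^E∖{0}} (Σ_{v∈V} (1/deg v)·|Σ_{e∋v} x_e|) / (Σ_{e∈E} |x_e|). -/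
/-!
Since `c ≥ 0`, the triangle inequality and exchanging the order of summation give
`Σᵢ cᵢ |Σ_{e∋i} xₑ| ≤ Σₑ (Σ_{i∈e} cᵢ) |xₑ| ≤ (max_{e∈E} Σ_{i∈e} cᵢ) · Σₑ |xₑ|`,
and the indicator of a maximising edge attains this bound.
-/

open Finset

section

variable {V : Type*} [Fintype V] [DecidableEq V]

def edgeWeight (c : V → ℝ) (e : Sym2 V) : ℝ := ∑ i with i ∈ e, c i

theorem edgeWeight_mk (c : V → ℝ) {i j : V} (h : i ≠ j) :
    edgeWeight c s(i, j) = c i + c j := by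
  have : ({k | k ∈ s(i, j)} : Finset V) = {i, j} := by ext; simp
  rw [edgeWeight, this, sum_pair h]

theorem sum_mul_sum_incident (c : V → ℝ) (y : Sym2 V → ℝ) (S : Finset (Sym2 V)) :
    ∑ i, c i * ∑ e ∈ S with i ∈ e, y e = ∑ e ∈ S, edgeWeight c e * y e := by
  simp_rw [mul_sum, sum_filter, edgeWeight, sum_filter, sum_mul]
  rw [sum_comm]
  refine sum_congr rfl fun e _ => sum_congr rfl fun i _ => ?_
  split_ifs <;> simp

theorem sum_mul_abs_sum_incident_le {c : V → ℝ} (hc : ∀ i, 0 ≤ c i) (S : Finset (Sym2 V))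
    (x : Sym2 V → ℝ) :
    ∑ i, c i * |∑ e ∈ S with i ∈ e, x e| ≤ ∑ e ∈ S, edgeWeight c e * |x e| :=
  (sum_le_sum fun i _ => mul_le_mul_of_nonneg_left (abs_sum_le_sum_abs _ _) (hc i)).trans_eq
    (sum_mul_sum_incident c (|x ·|) S)

theorem sum_mul_abs_sum_incident_single (c : V → ℝ) {S : Finset (Sym2 V)} {e₀ : Sym2 V}
    (he₀ : e₀ ∈ S) :
    ∑ i, c i * |∑ e ∈ S with i ∈ e, Pi.single e₀ (1 : ℝ) e| = edgeWeight c e₀ := by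
  simp only [sum_pi_single', mem_filter, he₀, true_and, edgeWeight, sum_filter]
  exact sum_congr rfl fun i _ => by split_ifs <;> simp

theorem isGreatest_weighted_incidence_ratio {c : V → ℝ} (hc : ∀ i, 0 ≤ c i) {S : Finset (Sym2 V)}
    (hS : S.Nonempty) :
    IsGreatest {r : ℝ | ∃ x : Sym2 V → ℝ, (∃ e ∈ S, x e ≠ 0) ∧
        r = (∑ i, c i * |∑ e ∈ S with i ∈ e, x e|) / (∑ e ∈ S, |x e|)}
      (S.sup' hS (edgeWeight c)) := by
  constructor
  · obtain ⟨e₀, he₀, hmax⟩ := exists_mem_eq_sup' hS (edgeWeight c)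
    refine ⟨Pi.single e₀ 1, ⟨e₀, he₀, by simp⟩, ?_⟩
    rw [sum_mul_abs_sum_incident_single c he₀, hmax]
    rw [sum_eq_single_of_mem e₀ he₀ fun e _ he => by simp [he]]
    simp
  · rintro r ⟨x, ⟨e₁, he₁, hx₁⟩, rfl⟩
    have hpos : 0 < ∑ e ∈ S, |x e| :=
      sum_pos' (fun e _ => abs_nonneg _) ⟨e₁, he₁, abs_pos.2 hx₁⟩
    rw [div_le_iff₀ hpos, mul_sum]
    exact (sum_mul_abs_sum_incident_le hc S x).trans
      (sum_le_sum fun e he => mul_le_mul_of_nonneg_right (le_sup' _ he) (abs_nonneg _))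

theorem isGreatest_adj_sum (G : SimpleGraph V) [DecidableRel G.Adj] (hE : G.edgeFinset.Nonempty)
    (c : V → ℝ) :
    IsGreatest {r : ℝ | ∃ i j : V, G.Adj i j ∧ r = c i + c j}
      (G.edgeFinset.sup' hE (edgeWeight c)) := by
  constructor
  · obtain ⟨e₀, he₀, hmax⟩ := exists_mem_eq_sup' hE (edgeWeight c)
    induction e₀ using Sym2.ind with
    | _ i j =>
      have hij : G.Adj i j := SimpleGraph.mem_edgeFinset.1 he₀
      exact ⟨i, j, hij, hmax.trans (edgeWeight_mk c hij.ne)⟩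
  · rintro r ⟨i, j, hij, rfl⟩
    rw [← edgeWeight_mk c hij.ne]
    exact le_sup' _ (SimpleGraph.mem_edgeFinset.2 hij)

theorem sSup_adj_sum_eq_sSup_weighted_incidence_ratio (G : SimpleGraph V) [DecidableRel G.Adj]
    (hE : G.edgeFinset.Nonempty) {c : V → ℝ} (hc : ∀ i, 0 ≤ c i) :
    sSup {r : ℝ | ∃ i j : V, G.Adj i j ∧ r = c i + c j} =
      sSup {r : ℝ | ∃ x : Sym2 V → ℝ, (∃ e ∈ G.edgeFinset, x e ≠ 0) ∧
        r = (∑ i, c i * |∑ e ∈ G.edgeFinset.filter (fun e => i ∈ e), x e|) /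
            (∑ e ∈ G.edgeFinset, |x e|)} :=
  (isGreatest_adj_sum G hE c).csSup_eq.trans (isGreatest_weighted_incidence_ratio hc hE).csSup_eq.symm

end

/-- For a finite simple graph with at least one edge and vertex weights
`c : V → [0,∞)`, `max_{{i,j}∈E}(c_i + c_j)` equals
`max_{x ∈ ℝ^E ∖ {0}} (Σ_{i∈V} c_i·|Σ_{e∋i} x_e|)/(Σ_{e∈E}|x_e|)`; in particular,
if `G` has no isolated vertices, taking `c_i = 1/deg i` gives the Cheeger-like
constant identity. -/
theorem cheeger_like_constant {V : Type*} [Fintype V] [DecidableEq V]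
    (G : SimpleGraph V) [DecidableRel G.Adj] (hE : G.edgeFinset.Nonempty)
    (c : V → ℝ) (hc : ∀ i, 0 ≤ c i) :
    (sSup {r : ℝ | ∃ i j : V, G.Adj i j ∧ r = c i + c j} =
      sSup {r : ℝ | ∃ x : Sym2 V → ℝ, (∃ e ∈ G.edgeFinset, x e ≠ 0) ∧
        r = (∑ i, c i * |∑ e ∈ G.edgeFinset.filter (fun e => i ∈ e), x e|) /
            (∑ e ∈ G.edgeFinset, |x e|)}) ∧
    ((∀ v : V, 0 < G.degree v) →
      sSup {r : ℝ | ∃ i j : V, G.Adj i j ∧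
          r = 1 / (G.degree i : ℝ) + 1 / (G.degree j : ℝ)} =
        sSup {r : ℝ | ∃ x : Sym2 V → ℝ, (∃ e ∈ G.edgeFinset, x e ≠ 0) ∧
          r = (∑ i, (1 / (G.degree i : ℝ)) *
                |∑ e ∈ G.edgeFinset.filter (fun e => i ∈ e), x e|) /
              (∑ e ∈ G.edgeFinset, |x e|)}) :=
  ⟨sSup_adj_sum_eq_sSup_weighted_incidence_ratio G hE hc,
    fun _ => sSup_adj_sum_eq_sSup_weighted_incidence_ratio G hE fun v => by positivity⟩
end

section
/- Let G = (V,E) be a finite connected simple graph with #V ≥ 2. Then (1/2)·max{h_int(G), h_ext(G)} ≤ P¹(G) ≤ h_ver(G), where P¹(G), h_int(G), h_ext(G), h_ver(G) are as defined below. -/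
open Finset

/-- The 1-Poincaré profile of a finite graph:
`P¹(G) = inf { Σᵢ max_{j∼i}|xᵢ−xⱼ| / Σᵢ|xᵢ| : Σᵢ xᵢ = 0, x ≠ 0 }`. -/
noncomputable def poincareProfile {V : Type*} [Fintype V] (G : SimpleGraph V)
    [DecidableRel G.Adj] : ℝ :=
  sInf {r : ℝ | ∃ x : V → ℝ, (∑ i, x i) = 0 ∧ x ≠ 0 ∧
    r = (∑ i, ⨆ j, if G.Adj i j then |x i - x j| else 0) / (∑ i, |x i|)}

/-- The internal vertex boundary `∂_int A`. -/
def intBoundary {V : Type*} [Fintype V] [DecidableEq V] (G : SimpleGraph V)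
    [DecidableRel G.Adj] (A : Finset V) : Finset V :=
  A.filter (fun i => ∃ j, j ∉ A ∧ G.Adj i j)

/-- The external vertex boundary `∂_ext A`. -/
def extBoundary {V : Type*} [Fintype V] [DecidableEq V] (G : SimpleGraph V)
    [DecidableRel G.Adj] (A : Finset V) : Finset V :=
  Aᶜ.filter (fun j => ∃ i, i ∈ A ∧ G.Adj i j)

/-- The modified Cheeger constant of `G` with respect to a vertex-boundary
operation `bd`. -/
noncomputable def modCheeger {V : Type*} [Fintype V] [DecidableEq V]
    (G : SimpleGraph V) (bd : Finset V → Finset V) : ℝ :=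
  sInf {r : ℝ | ∃ A : Finset V, A ≠ ∅ ∧ A ≠ Finset.univ ∧
    r = ((bd A).card : ℝ) / min (A.card : ℝ) ((Aᶜ).card : ℝ)}

/-!
Upper bound: for a cut `A`, the vector equal to `#Aᶜ` on `A` and to `-#A` off `A` has sum zero,
`ℓ¹`-norm `2 · #A · #Aᶜ`, and local gradient `#V` on `∂_ver A` and `0` elsewhere.

Lower bound, by co-area: for `x` with sum zero, the boundary of each superlevel set `{x > t}` is
`{i | a i ≤ t < b i}` with `b i - a i ≤ max_{j ∼ i} |x i - x j|` (for `∂_int`, `a i` is the minimum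
of `x` over the closed neighbourhood of `i` and `b = x`; dually for `∂_ext`). If `m` is a median
of `x`, then `min(#{x > t}, #{x ≤ t})` is at least the number of `i` with `t` between `x i`
and `m`, so
integrating `h · min(#{x > t}, #{x ≤ t}) ≤ #∂{x > t}` over `t` gives
`h · ∑ |x i - m| ≤ ∑ max_{j ∼ i} |x i - x j|`; finally `∑ |x i| ≤ 2 ∑ |x i - m|` as `∑ x i = 0`.
-/

section Coarea

open MeasureTheory

variable {ι : Type*} [Fintype ι]

lemma integrable_indicator_Ico_one (a b : ℝ) :
    Integrable ((Set.Ico a b).indicator (1 : ℝ → ℝ)) :=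
  (integrable_indicator_iff measurableSet_Ico).2 (integrableOn_const (by simp))

lemma card_filter_mem_Ico_eq_sum_indicator (a b : ι → ℝ) (t : ℝ) :
    (#{i | a i ≤ t ∧ t < b i} : ℝ) = ∑ i, (Set.Ico (a i) (b i)).indicator 1 t := by
  rw [← sum_boole]
  exact sum_congr rfl fun i _ => by simp [Set.indicator_apply]

lemma integrable_card_filter_mem_Ico (a b : ι → ℝ) :
    Integrable fun t => (#{i | a i ≤ t ∧ t < b i} : ℝ) := by
  simp_rw [card_filter_mem_Ico_eq_sum_indicator]
  exact integrable_finsetSum _ fun i _ => integrable_indicator_Ico_one _ _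

lemma integral_card_filter_mem_Ico (a b : ι → ℝ) :
    ∫ t, (#{i | a i ≤ t ∧ t < b i} : ℝ) = ∑ i, max (b i - a i) 0 := by
  simp_rw [card_filter_mem_Ico_eq_sum_indicator]
  rw [integral_finsetSum _ fun i _ => integrable_indicator_Ico_one _ _]
  simp_rw [integral_indicator_one measurableSet_Ico, Real.volume_real_Ico]

/-- A discrete co-area inequality, obtained by integrating the hypothesis over `t`. -/
lemma mul_sum_length_le_of_card_filter_le (h : ℝ) (p q a b : ι → ℝ)
    (hcard : ∀ t, h * #{i | p i ≤ t ∧ t < q i} ≤ #{i | a i ≤ t ∧ t < b i}) :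
    h * ∑ i, max (q i - p i) 0 ≤ ∑ i, max (b i - a i) 0 := by
  rw [← integral_card_filter_mem_Ico, ← integral_card_filter_mem_Ico, ← integral_const_mul]
  exact integral_mono ((integrable_card_filter_mem_Ico p q).const_mul h)
    (integrable_card_filter_mem_Ico a b) hcard

end Coarea

lemma exists_median {ι : Type*} [Fintype ι] [Nonempty ι] (x : ι → ℝ) :
    ∃ m, 2 * #{i | x i < m} ≤ Fintype.card ι ∧ 2 * #{i | m < x i} ≤ Fintype.card ι := by
  set S := {v ∈ univ.image x | 2 * #{i | x i < v} ≤ Fintype.card ι}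
  have hS : S.Nonempty := by
    obtain ⟨i₀, hi₀⟩ := Finite.exists_min x
    refine ⟨x i₀, mem_filter.2 ⟨mem_image_of_mem x (mem_univ _), ?_⟩⟩
    simp [filter_false_of_mem fun i _ => not_lt.2 (hi₀ i)]
  obtain ⟨m, hmS, hmax⟩ := S.exists_max_image id hS
  refine ⟨m, (mem_filter.1 hmS).2, ?_⟩
  by_contra! hbig
  obtain ⟨j, hj, hjmin⟩ := exists_min_image {i | m < x i} x
    (card_pos.1 (by omega))
  have hsub : ({i | x i < x j} : Finset ι) ⊆ ({i | ¬m < x i} : Finset ι) := fun i hi => by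
    simp only [mem_filter, mem_univ, true_and] at hi ⊢
    exact fun hmi => (hjmin i (by simpa using hmi)).not_gt hi
  have hsplit := card_filter_add_card_filter_not (s := univ) (fun i => m < x i)
  rw [card_univ] at hsplit
  have hjS : x j ∈ S := mem_filter.2 ⟨mem_image_of_mem x (mem_univ _), by
    have := card_le_card hsub
    omega⟩
  exact (hmax _ hjS).not_gt (by simpa using hj)

lemma card_filter_between_median_le_min {ι : Type*} [Fintype ι] [DecidableEq ι] (x : ι → ℝ)
    {m : ℝ} (hlt : 2 * #{i | x i < m} ≤ Fintype.card ι) (hgt : 2 * #{i | m < x i} ≤ Fintype.card ι)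
    (t : ℝ) :
    #{i | min (x i) m ≤ t ∧ t < max (x i) m} ≤
      min #{i | t < x i} #({i | t < x i} : Finset ι)ᶜ := by
  set A : Finset ι := {i | t < x i}
  have hAc := card_compl A
  rcases le_or_gt m t with hmt | htm
  · have hI : ({i | min (x i) m ≤ t ∧ t < max (x i) m} : Finset ι) ⊆ A := fun i hi => by
      simp only [A, mem_filter, mem_univ, true_and, lt_max_iff] at hi ⊢
      exact hi.2.resolve_right hmt.not_gt
    have hA : A ⊆ ({i | m < x i} : Finset ι) := fun i hi => by
      simp only [A, mem_filter, mem_univ, true_and] at hi ⊢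
      exact hmt.trans_lt hi
    have := card_le_card hI; have := card_le_card hA; have := card_le_univ A
    omega
  · have hI : ({i | min (x i) m ≤ t ∧ t < max (x i) m} : Finset ι) ⊆ Aᶜ := fun i hi => by
      simp only [A, mem_compl, mem_filter, mem_univ, true_and, min_le_iff, not_lt] at hi ⊢
      exact hi.1.resolve_right htm.not_ge
    have hA : Aᶜ ⊆ ({i | x i < m} : Finset ι) := fun i hi => by
      simp only [A, mem_compl, mem_filter, mem_univ, true_and, not_lt] at hi ⊢
      exact hi.trans_lt htm
    have := card_le_card hI; have := card_le_card hA; have := card_le_univ A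
    omega

lemma sum_abs_le_two_mul_sum_abs_sub {ι : Type*} [Fintype ι] {x : ι → ℝ} (hx : ∑ i, x i = 0)
    (m : ℝ) : ∑ i, |x i| ≤ 2 * ∑ i, |x i - m| := by
  have hm : Fintype.card ι * |m| ≤ ∑ i, |x i - m| :=
    calc Fintype.card ι * |m| = |∑ i, (x i - m)| := by
          simp [sum_sub_distrib, hx, abs_mul]
      _ ≤ ∑ i, |x i - m| := abs_sum_le_sum_abs _ _
  have hx_le : ∑ i, |x i| ≤ ∑ i, (|x i - m| + |m|) :=
    sum_le_sum fun i _ => by linarith [abs_sub_abs_le_abs_sub (x i) m]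
  rw [sum_add_distrib, sum_const, card_univ, nsmul_eq_mul] at hx_le
  linarith

lemma mul_add_div_le_div_min {B k l : ℝ} (hB : 0 ≤ B) (hk : 0 < k) (hl : 0 < l) :
    B * (l + k) / (2 * k * l) ≤ B / min k l := by
  rw [div_le_div_iff₀ (by positivity) (lt_min hk hl)]
  rcases min_cases k l with ⟨h, hkl⟩ | ⟨h, hkl⟩ <;> rw [h]
  · nlinarith [mul_nonneg hB (mul_nonneg hk.le (sub_nonneg.2 hkl))]
  · nlinarith [mul_nonneg hB (mul_nonneg hl.le (sub_nonneg.2 hkl.le))]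

section Cheeger

variable {V : Type*} [Fintype V] [DecidableEq V] (G : SimpleGraph V)

lemma modCheeger_nonneg (bd : Finset V → Finset V) : 0 ≤ modCheeger G bd :=
  Real.sInf_nonneg (by rintro _ ⟨A, -, -, rfl⟩; positivity)

lemma modCheeger_mul_min_card_le (bd : Finset V → Finset V) (A : Finset V) :
    modCheeger G bd * min (#A : ℝ) #Aᶜ ≤ #(bd A) := by
  rcases eq_or_ne A ∅ with rfl | hA
  · simp
  rcases eq_or_ne A univ with rfl | hA'
  · simp
  have hmin : 0 < min (#A : ℝ) #Aᶜ := lt_min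
    (by exact_mod_cast card_pos.2 (nonempty_iff_ne_empty.2 hA))
    (by exact_mod_cast card_pos.2 ((compl_ne_univ_iff_nonempty _).1 (by rwa [compl_compl])))
  rw [← le_div_iff₀ hmin]
  exact csInf_le ⟨0, by rintro _ ⟨B, -, -, rfl⟩; positivity⟩ ⟨A, hA, hA', rfl⟩

lemma le_modCheeger (hcard : 2 ≤ Fintype.card V) (bd : Finset V → Finset V) {r : ℝ}
    (h : ∀ A : Finset V, A ≠ ∅ → A ≠ univ → r ≤ #(bd A) / min (#A : ℝ) #Aᶜ) :
    r ≤ modCheeger G bd := by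
  have : Nontrivial V := Fintype.one_lt_card_iff_nontrivial.1 hcard
  obtain ⟨i⟩ := this.to_nonempty
  exact le_csInf ⟨_, {i}, singleton_ne_empty i, singleton_ne_univ i, rfl⟩
    fun _ ⟨A, hA, hA', hr⟩ => hr ▸ h A hA hA'

end Cheeger

section Graph

variable {V : Type*} (G : SimpleGraph V) [DecidableRel G.Adj]

noncomputable def maxGradient (x : V → ℝ) (i : V) : ℝ :=
  ⨆ j, if G.Adj i j then |x i - x j| else 0

lemma maxGradient_nonneg (x : V → ℝ) (i : V) : 0 ≤ maxGradient G x i :=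
  Real.iSup_nonneg fun j => by split_ifs <;> positivity

lemma abs_sub_le_maxGradient [Finite V] (x : V → ℝ) {i j : V} (h : G.Adj i j) :
    |x i - x j| ≤ maxGradient G x i :=
  le_ciSup_of_le (Set.finite_range _).bddAbove j (by simp [h])

lemma maxGradient_le (x : V → ℝ) {i : V} {c : ℝ} (hc : 0 ≤ c)
    (h : ∀ j, G.Adj i j → |x i - x j| ≤ c) : maxGradient G x i ≤ c :=
  Real.iSup_le (fun j => by split_ifs with hij; exacts [h j hij, hc]) hc

variable [Fintype V]

lemma poincareProfile_le (x : V → ℝ) (hx₀ : ∑ i, x i = 0) (hx : x ≠ 0) :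
    poincareProfile G ≤ (∑ i, maxGradient G x i) / ∑ i, |x i| :=
  csInf_le ⟨0, by
    rintro _ ⟨y, -, -, rfl⟩
    exact div_nonneg (sum_nonneg fun i _ => maxGradient_nonneg G y i)
      (sum_nonneg fun i _ => abs_nonneg _)⟩ ⟨x, hx₀, hx, rfl⟩

lemma le_poincareProfile (hcard : 2 ≤ Fintype.card V) {r : ℝ}
    (h : ∀ x : V → ℝ, ∑ i, x i = 0 → x ≠ 0 → r ≤ (∑ i, maxGradient G x i) / ∑ i, |x i|) :
    r ≤ poincareProfile G := by
  classical
  obtain ⟨i, j, hij⟩ := Fintype.exists_pair_of_one_lt_card hcard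
  set y : V → ℝ := Pi.single i 1 - Pi.single j 1
  have hsum : ∑ k, y k = 0 := by simp [y, sum_sub_distrib]
  have hne : y ≠ 0 := fun h0 => by simpa [y, hij] using congrFun h0 i
  exact le_csInf ⟨_, _, hsum, hne, rfl⟩ fun _ ⟨x, hx₀, hx, hr⟩ => hr ▸ h x hx₀ hx

end Graph

section Boundary

variable {V : Type*} [Fintype V] [DecidableEq V] (G : SimpleGraph V) [DecidableRel G.Adj]

lemma intBoundary_superlevel (x : V → ℝ) (t : ℝ) :
    intBoundary G {i | t < x i} =
      ({i | (insert i (G.neighborFinset i)).inf' (insert_nonempty _ _) x ≤ t ∧ t < x i} :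
        Finset V) := by
  ext i
  simp only [intBoundary, mem_filter, mem_univ, true_and, inf'_le_iff, mem_insert,
    SimpleGraph.mem_neighborFinset, exists_eq_or_imp, not_lt]
  constructor
  · rintro ⟨hi, j, hj, hij⟩
    exact ⟨Or.inr ⟨j, hij, hj⟩, hi⟩
  · rintro ⟨hle | ⟨j, hij, hj⟩, hi⟩
    · exact absurd hi hle.not_gt
    · exact ⟨hi, j, hj, hij⟩

lemma extBoundary_superlevel (x : V → ℝ) (t : ℝ) :
    extBoundary G {i | t < x i} =
      ({j | x j ≤ t ∧ t < (insert j (G.neighborFinset j)).sup' (insert_nonempty _ _) x} :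
        Finset V) := by
  ext j
  simp only [extBoundary, mem_compl, mem_filter, mem_univ, true_and, lt_sup'_iff, mem_insert,
    SimpleGraph.mem_neighborFinset, exists_eq_or_imp, not_lt]
  constructor
  · rintro ⟨hj, i, hi, hij⟩
    exact ⟨hj, Or.inr ⟨i, hij.symm, hi⟩⟩
  · rintro ⟨hj, hlt | ⟨i, hji, hi⟩⟩
    · exact absurd hlt hj.not_gt
    · exact ⟨hj, i, hi, hji.symm⟩

lemma sub_inf'_closedNeighborhood_le_maxGradient (x : V → ℝ) (i : V) :
    x i - (insert i (G.neighborFinset i)).inf' (insert_nonempty _ _) x ≤ maxGradient G x i := by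
  obtain ⟨j, hj, hjx⟩ := exists_mem_eq_inf' (insert_nonempty i (G.neighborFinset i)) x
  rw [hjx]
  rcases mem_insert.1 hj with rfl | hij
  · simpa using maxGradient_nonneg G x j
  · exact (le_abs_self _).trans
      (abs_sub_le_maxGradient G x ((G.mem_neighborFinset i j).1 hij))

lemma sup'_closedNeighborhood_sub_le_maxGradient (x : V → ℝ) (j : V) :
    (insert j (G.neighborFinset j)).sup' (insert_nonempty _ _) x - x j ≤ maxGradient G x j := by
  obtain ⟨i, hi, hix⟩ := exists_mem_eq_sup' (insert_nonempty j (G.neighborFinset j)) x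
  rw [hix]
  rcases mem_insert.1 hi with rfl | hji
  · simpa using maxGradient_nonneg G x i
  · exact (le_abs_self _).trans ((abs_sub_comm _ _).trans_le
      (abs_sub_le_maxGradient G x ((G.mem_neighborFinset j i).1 hji)))

lemma half_mul_modCheeger_le_poincareProfile (hcard : 2 ≤ Fintype.card V)
    (bd : Finset V → Finset V)
    (hbd : ∀ x : V → ℝ, ∃ a b : V → ℝ,
      (∀ t, bd {i | t < x i} = ({i | a i ≤ t ∧ t < b i} : Finset V)) ∧
        ∀ i, b i - a i ≤ maxGradient G x i) :
    1 / 2 * modCheeger G bd ≤ poincareProfile G := by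
  have : Nonempty V := Fintype.card_pos_iff.1 (by omega)
  refine le_poincareProfile G hcard fun x hx₀ hx => ?_
  obtain ⟨a, b, hlevel, hab⟩ := hbd x
  obtain ⟨m, hlt, hgt⟩ := exists_median x
  set h := modCheeger G bd
  have hh : 0 ≤ h := modCheeger_nonneg G bd
  have hcoarea := mul_sum_length_le_of_card_filter_le h (fun i => min (x i) m)
    (fun i => max (x i) m) a b fun t => by
      calc h * #{i | min (x i) m ≤ t ∧ t < max (x i) m}
          ≤ h * min (#{i | t < x i} : ℝ) #({i | t < x i} : Finset V)ᶜ := by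
            gcongr
            exact_mod_cast card_filter_between_median_le_min x hlt hgt t
        _ ≤ #{i | a i ≤ t ∧ t < b i} := hlevel t ▸ modCheeger_mul_min_card_le G bd _
  have hpos : 0 < ∑ i, |x i| := by
    obtain ⟨i, hi⟩ := Function.ne_iff.1 hx
    exact sum_pos' (fun i _ => abs_nonneg _) ⟨i, mem_univ _, abs_pos.2 hi⟩
  rw [le_div_iff₀ hpos]
  calc 1 / 2 * h * ∑ i, |x i| ≤ h * ∑ i, |x i - m| := by
        nlinarith [sum_abs_le_two_mul_sum_abs_sub hx₀ m]
    _ = h * ∑ i, max (max (x i) m - min (x i) m) 0 := by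
        simp_rw [max_sub_min_eq_abs', max_eq_left (abs_nonneg (_ : ℝ))]
    _ ≤ ∑ i, max (b i - a i) 0 := hcoarea
    _ ≤ ∑ i, maxGradient G x i :=
        sum_le_sum fun i _ => max_le (hab i) (maxGradient_nonneg G x i)

lemma maxGradient_ite_le (A : Finset V) (α β : ℝ) (i : V) :
    maxGradient G (fun j => if j ∈ A then α else β) i ≤
      if i ∈ intBoundary G A ∪ extBoundary G A then |α - β| else 0 := by
  refine maxGradient_le G _ (by split_ifs <;> positivity) fun j hij => ?_
  by_cases hi : i ∈ A <;> by_cases hj : j ∈ A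
  · simp only [hi, hj, if_true, sub_self, abs_zero]
    split_ifs <;> positivity
  · have hB : i ∈ intBoundary G A ∪ extBoundary G A :=
      mem_union_left _ (mem_filter.2 ⟨hi, j, hj, hij⟩)
    simp [hi, hj, hB]
  · have hB : i ∈ intBoundary G A ∪ extBoundary G A :=
      mem_union_right _ (mem_filter.2 ⟨mem_compl.2 hi, j, hj, hij.symm⟩)
    simp [hi, hj, hB, abs_sub_comm]
  · simp only [hi, hj, if_false, sub_self, abs_zero]
    split_ifs <;> positivity

lemma poincareProfile_le_card_vertexBoundary_div (A : Finset V) (hA : A ≠ ∅)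
    (hA' : A ≠ univ) :
    poincareProfile G ≤ #(intBoundary G A ∪ extBoundary G A) / min (#A : ℝ) #Aᶜ := by
  set B := intBoundary G A ∪ extBoundary G A
  set k : ℝ := (#A : ℝ)
  set l : ℝ := (#Aᶜ : ℝ)
  have hk : 0 < k := Nat.cast_pos.2 (card_pos.2 (nonempty_iff_ne_empty.2 hA))
  have hl : 0 < l :=
    Nat.cast_pos.2 (card_pos.2 ((compl_ne_univ_iff_nonempty _).1 (by rwa [compl_compl])))
  set x : V → ℝ := fun i => if i ∈ A then l else -k
  have hsum_comp : ∀ f : ℝ → ℝ, ∑ i, f (x i) = k * f l + l * f (-k) := fun f => by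
    rw [← sum_add_sum_compl A, sum_congr rfl fun i hi => congrArg f (if_pos hi),
      sum_congr rfl fun i hi => congrArg f (if_neg (mem_compl.1 hi))]
    simp [k, l]
  have hsum : ∑ i, x i = 0 := by
    simpa [mul_comm] using hsum_comp id
  have habs : ∑ i, |x i| = 2 * k * l := by
    rw [hsum_comp abs, abs_neg, abs_of_pos hk, abs_of_pos hl]
    ring
  have hx : x ≠ 0 := by
    obtain ⟨i, hi⟩ := nonempty_iff_ne_empty.2 hA
    exact Function.ne_iff.2 ⟨i, by simp [x, hi, hl.ne']⟩
  have hgrad : ∑ i, maxGradient G x i ≤ #B * (l + k) := by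
    calc ∑ i, maxGradient G x i ≤ ∑ i, if i ∈ B then |l - -k| else 0 :=
          sum_le_sum fun i _ => maxGradient_ite_le G A l (-k) i
      _ = #B * (l + k) := by
          rw [sum_ite_mem, univ_inter, sum_const, nsmul_eq_mul, sub_neg_eq_add,
            abs_of_pos (by positivity)]
  calc poincareProfile G ≤ (∑ i, maxGradient G x i) / ∑ i, |x i| :=
        poincareProfile_le G x hsum hx
    _ ≤ #B * (l + k) / (2 * k * l) := by rw [habs]; gcongr
    _ ≤ #B / min k l := mul_add_div_le_div_min (Nat.cast_nonneg _) hk hl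

end Boundary

theorem poincare_profile_cheeger_bounds_general {V : Type*} [Fintype V] [DecidableEq V]
    (G : SimpleGraph V) [DecidableRel G.Adj]
    (hcard : 2 ≤ Fintype.card V) :
    (1 / 2) * max (modCheeger G (intBoundary G)) (modCheeger G (extBoundary G)) ≤
        poincareProfile G ∧
      poincareProfile G ≤
        modCheeger G (fun A => intBoundary G A ∪ extBoundary G A) := by
  refine ⟨?_, le_modCheeger G hcard _ (poincareProfile_le_card_vertexBoundary_div G)⟩
  rw [mul_max_of_nonneg _ _ (by norm_num)]
  refine max_le (half_mul_modCheeger_le_poincareProfile G hcard _ fun x => ?_)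
    (half_mul_modCheeger_le_poincareProfile G hcard _ fun x => ?_)
  · exact ⟨_, x, intBoundary_superlevel G x, sub_inf'_closedNeighborhood_le_maxGradient G x⟩
  · exact ⟨x, _, extBoundary_superlevel G x, sup'_closedNeighborhood_sub_le_maxGradient G x⟩

/-- `(1/2)·max{h_int(G), h_ext(G)} ≤ P¹(G) ≤ h_ver(G)` for a finite connected
simple graph on at least two vertices. -/
theorem poincare_profile_cheeger_bounds {V : Type*} [Fintype V] [DecidableEq V]
    (G : SimpleGraph V) [DecidableRel G.Adj]
    (hconn : G.Connected) (hcard : 2 ≤ Fintype.card V) :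
    (1 / 2) * max (modCheeger G (intBoundary G)) (modCheeger G (extBoundary G)) ≤
        poincareProfile G ∧
      poincareProfile G ≤
        modCheeger G (fun A => intBoundary G A ∪ extBoundary G A) :=
  poincare_profile_cheeger_bounds_general G hcard
end
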